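/- arXiv:1806.03539 — 10 statements merged into one kernel-verified Lean document; each statement's English description precedes it below -/
import Mathlib

section
/- The composition of two deterministic reversible gadgets is deterministic and reversible: if the state space of each gadget is a graph of maximum degree for which each state-location pair has at most one matched partner (an undirected partial matching), and composing the gadgets identifies some locations pairwise (each internal location of one gadget connected to exactly one internal location of the other), then each external state-location pair of the composed system reaches at most one other external state-location pair by a maximal internal walk, and the resulting external transition relation is again an undirected partial matching. -/
/-
Every vertex of the composed system has at most one partner inside its gadget
(an `M`-edge) and at most one partner through a connection (a `C`-edge). Hence a walk from an
external vertex `u`, which has no `C`-edge, can be straightened into the unique alternating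
path `u, M, C, M, C, …`: every vertex reachable from `u` is reached by it, after an even number
of steps (ending with a `C`-edge, or at `u`) or an odd number (ending with an `M`-edge). An
external vertex `v ≠ u` is therefore reached just after an `M`-edge, and since it has no
`C`-edge the path stops there; two such vertices are the same stopping point.
Reversibility is the symmetry of the reachability relation of an undirected graph.
-/

section
variable {V₁ V₂ : Type*}

/-- Edge relation of the composition of two gadgets (matchings `M₁`, `M₂` on disjoint
vertex sets of state-location pairs) over a set of connections `C` identifying internal
locations of the first gadget with internal locations of the second. -/
def CompEdge (M₁ : V₁ → V₁ → Prop) (M₂ : V₂ → V₂ → Prop) (C : V₁ → V₂ → Prop) :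
    V₁ ⊕ V₂ → V₁ ⊕ V₂ → Prop := fun a b =>
  match a, b with
  | .inl x, .inl y => M₁ x y
  | .inr x, .inr y => M₂ x y
  | .inl x, .inr y => C x y
  | .inr x, .inl y => C y x

/-- A vertex is external if it takes part in no connection. -/
def CompExternal (C : V₁ → V₂ → Prop) : V₁ ⊕ V₂ → Prop := fun a =>
  match a with
  | .inl x => ∀ w, ¬ C x w
  | .inr y => ∀ v, ¬ C v y

/-- The external transition relation of the composed system: an external vertex reaches
another external vertex by a walk through the composed system. -/
def CompExtTrans (M₁ : V₁ → V₁ → Prop) (M₂ : V₂ → V₂ → Prop) (C : V₁ → V₂ → Prop) :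
    V₁ ⊕ V₂ → V₁ ⊕ V₂ → Prop := fun u v =>
  CompExternal C u ∧ CompExternal C v ∧ u ≠ v ∧
    Relation.ReflTransGen (CompEdge M₁ M₂ C) u v

open Relation

section AlternatingPath

variable {V : Type*} {M C : V → V → Prop}

instance [Std.Symm M] [Std.Symm C] : Std.Symm (M ⊔ C) :=
  ⟨fun _ _ h => h.imp symm symm⟩

theorem Relator.RightUnique.relComp (hM : Relator.RightUnique M) (hC : Relator.RightUnique C) :
    Relator.RightUnique (Comp M C) := by
  rintro a b c ⟨x, hax, hxb⟩ ⟨y, hay, hyc⟩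
  cases hM hax hay
  exact hC hxb hyc

theorem eq_of_reflTransGen_comp_of_forall_not {u x : V} (hx : ∀ c, ¬ C c x)
    (h : ReflTransGen (Comp M C) u x) : x = u := by
  rcases h.cases_tail with rfl | ⟨_, _, _, _, hcx⟩
  · rfl
  · exact absurd hcx (hx _)

theorem eq_of_reflTransGen_comp_of_rel (hMu : Relator.RightUnique M) {a v b : V} (hav : M a v)
    (hv : ∀ y, ¬ C v y) (h : ReflTransGen (Comp M C) a b) : a = b := by
  rcases h.cases_head with rfl | ⟨_, ⟨c, hac, hcd⟩, _⟩
  · rfl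
  · cases hMu hav hac
    exact absurd hcd (hv _)

/-- From a vertex without `C`-edge, every vertex reachable along `M ⊔ C` is reached by the
alternating path `M, C, M, C, …` after an even number of steps (left) or an odd one (right). -/
theorem reflTransGen_sup_imp_alternating [Std.Symm M] [Std.Symm C] (hMu : Relator.RightUnique M)
    (hCu : Relator.RightUnique C) {u x : V} (hu : ∀ y, ¬ C u y) (h : ReflTransGen (M ⊔ C) u x) :
    ReflTransGen (Comp M C) u x ∨ Comp (ReflTransGen (Comp M C)) M u x := by
  induction h with
  | refl => exact .inl .refl
  | @tail x y _ hxy ih =>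
    rcases ih with heven | ⟨a, ha, hax⟩ <;> rcases hxy with hM | hC
    · exact .inr ⟨x, heven, hM⟩
    · rcases heven.cases_tail with rfl | ⟨a, ha, b, hab, hbx⟩
      · exact absurd hC (hu y)
      · cases hCu (symm hbx) hC
        exact .inr ⟨a, ha, hab⟩
    · cases hMu (symm hax) hM
      exact .inl ha
    · exact .inl (ha.tail ⟨x, hax, hC⟩)

theorem eq_of_reflTransGen_sup [Std.Symm M] [Std.Symm C] (hMu : Relator.RightUnique M)
    (hCu : Relator.RightUnique C) {u v w : V} (hu : ∀ y, ¬ C u y)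
    (hv : ∀ y, ¬ C v y) (hw : ∀ y, ¬ C w y) (huv : u ≠ v) (huw : u ≠ w)
    (huv' : ReflTransGen (M ⊔ C) u v) (huw' : ReflTransGen (M ⊔ C) u w) : v = w := by
  have odd {x : V} (hx : ∀ y, ¬ C x y) (hux : u ≠ x) (h : ReflTransGen (M ⊔ C) u x) :
      Comp (ReflTransGen (Comp M C)) M u x :=
    (reflTransGen_sup_imp_alternating hMu hCu hu h).resolve_left
      fun he => hux (eq_of_reflTransGen_comp_of_forall_not (fun c hc => hx c (symm hc)) he).symm
  obtain ⟨a, ha, hav⟩ := odd hv huv huv'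
  obtain ⟨b, hb, hbw⟩ := odd hw huw huw'
  rcases ReflTransGen.total_of_right_unique (hMu.relComp hCu) ha hb with hab | hba
  · cases eq_of_reflTransGen_comp_of_rel hMu hav hv hab
    exact hMu hav hbw
  · cases eq_of_reflTransGen_comp_of_rel hMu hbw hw hba
    exact hMu hav hbw

end AlternatingPath

section Composition

def crossRel (C : V₁ → V₂ → Prop) : V₁ ⊕ V₂ → V₁ ⊕ V₂ → Prop
  | .inl x, .inr y => C x y
  | .inr y, .inl x => C x y
  | _, _ => False

variable {M₁ : V₁ → V₁ → Prop} {M₂ : V₂ → V₂ → Prop} {C : V₁ → V₂ → Prop}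

theorem compEdge_eq_liftRel_sup_crossRel :
    CompEdge M₁ M₂ C = Sum.LiftRel M₁ M₂ ⊔ crossRel C := by
  funext a b
  rcases a with x | x <;> rcases b with y | y <;> simp [CompEdge, crossRel]

theorem compExternal_iff_forall_not_crossRel {a : V₁ ⊕ V₂} :
    CompExternal C a ↔ ∀ b, ¬ crossRel C a b := by
  rcases a with x | y
  · exact ⟨fun h => by rintro (_ | w) hc; exacts [hc, h w hc], fun h w => h (.inr w)⟩
  · exact ⟨fun h => by rintro (v | _) hc; exacts [h v hc, hc], fun h v => h (.inl v)⟩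

instance [Std.Symm M₁] [Std.Symm M₂] : Std.Symm (Sum.LiftRel M₁ M₂) := by
  refine ⟨?_⟩
  rintro _ _ (⟨h⟩ | ⟨h⟩)
  exacts [.inl (symm h), .inr (symm h)]

instance : Std.Symm (crossRel C) := by
  refine ⟨?_⟩
  rintro (_ | _) (_ | _) h <;> exact h

theorem rightUnique_liftRel (h₁ : Relator.RightUnique M₁) (h₂ : Relator.RightUnique M₂) :
    Relator.RightUnique (Sum.LiftRel M₁ M₂) := by
  rintro _ _ _ (⟨hb⟩ | ⟨hb⟩) hc <;> cases hc
  exacts [congrArg _ (h₁ hb ‹_›), congrArg _ (h₂ hb ‹_›)]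

theorem rightUnique_crossRel (h₁ : Relator.RightUnique C) (h₂ : Relator.LeftUnique C) :
    Relator.RightUnique (crossRel C) := by
  rintro (_ | _) (_ | _) (_ | _) hb hc <;> first | exact hb.elim | exact hc.elim | skip
  exacts [congrArg _ (h₁ hb hc), congrArg _ (h₂ hb hc)]

end Composition

theorem composition_deterministic_reversible_general
    (M₁ : V₁ → V₁ → Prop) (M₂ : V₂ → V₂ → Prop) (C : V₁ → V₂ → Prop)
    (hM₁s : Symmetric M₁)
    (hM₁u : ∀ v w w', M₁ v w → M₁ v w' → w = w')
    (hM₂s : Symmetric M₂)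
    (hM₂u : ∀ v w w', M₂ v w → M₂ v w' → w = w')
    (hCu₁ : ∀ v w w', C v w → C v w' → w = w')
    (hCu₂ : ∀ v v' w, C v w → C v' w → v = v') :
    (∀ u v, CompExtTrans M₁ M₂ C u v → CompExtTrans M₁ M₂ C v u) ∧
    (∀ u v w, CompExtTrans M₁ M₂ C u v → CompExtTrans M₁ M₂ C u w → v = w) := by
  have : Std.Symm M₁ := ⟨fun _ _ h => hM₁s h⟩
  have : Std.Symm M₂ := ⟨fun _ _ h => hM₂s h⟩
  have hMu : Relator.RightUnique (Sum.LiftRel M₁ M₂) :=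
    rightUnique_liftRel (fun _ _ _ => hM₁u _ _ _) (fun _ _ _ => hM₂u _ _ _)
  have hCu : Relator.RightUnique (crossRel C) :=
    rightUnique_crossRel (fun _ _ _ => hCu₁ _ _ _) (fun _ _ _ => hCu₂ _ _ _)
  simp only [CompExtTrans, compEdge_eq_liftRel_sup_crossRel, compExternal_iff_forall_not_crossRel]
  refine ⟨fun u v ⟨hu, hv, huv, h⟩ => ⟨hv, hu, huv.symm, symm h⟩, ?_⟩
  rintro u v w ⟨hu, hv, huv, h⟩ ⟨-, hw, huw, h'⟩
  exact eq_of_reflTransGen_sup hMu hCu hu hv hw huv huw h h'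

/-- the composition of two deterministic reversible gadgets is
deterministic and reversible.  If each gadget's state space is an undirected partial
matching (symmetric, irreflexive, each vertex has at most one partner) and the
connections `C` form a partial matching between internal locations, then each external
state-location pair reaches at most one other external state-location pair, and the
resulting external transition relation is again an undirected partial matching. -/
theorem composition_deterministic_reversible
    (M₁ : V₁ → V₁ → Prop) (M₂ : V₂ → V₂ → Prop) (C : V₁ → V₂ → Prop)
    (hM₁s : Symmetric M₁) (hM₁i : ∀ v, ¬ M₁ v v)
    (hM₁u : ∀ v w w', M₁ v w → M₁ v w' → w = w')
    (hM₂s : Symmetric M₂) (hM₂i : ∀ v, ¬ M₂ v v)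
    (hM₂u : ∀ v w w', M₂ v w → M₂ v w' → w = w')
    (hCu₁ : ∀ v w w', C v w → C v w' → w = w')
    (hCu₂ : ∀ v v' w, C v w → C v' w → v = v') :
    (∀ u v, CompExtTrans M₁ M₂ C u v → CompExtTrans M₁ M₂ C v u) ∧
    (∀ u v w, CompExtTrans M₁ M₂ C u v → CompExtTrans M₁ M₂ C u w → v = w) :=
  composition_deterministic_reversible_general M₁ M₂ C hM₁s hM₁u hM₂s hM₂u hCu₁ hCu₂

end
end

section
/- In a system consisting of 1-toggles (directed edges that reverse direction when traversed) and undirected edges, if there exists a walk from s to t, then there exists a walk from s to t that traverses each toggle at most once; consequently, t is reachable from s in the toggle system if and only if t is reachable from s in the mixed graph obtained by treating each toggle as a static directed edge in its initial orientation. -/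
section
variable (V T : Type*)

/-- A configuration of a 1-toggle system: current vertex together with the current
orientation of each toggle (`false` = initial orientation, `true` = reversed). -/
abbrev ToggleConfig := V × (T → Bool)

variable {V T}

/-- The directed pair currently realized by toggle `t` (with initial endpoints `e t`),
given its orientation bit `b`. -/
def dirOf (e : T → V × V) (t : T) (b : Bool) : V × V :=
  if b then ((e t).2, (e t).1) else e t

/-- One move in a 1-toggle system: either along an undirected edge (`U`), or along a
toggle in its current direction, which flips that toggle. -/
def ToggleStep [DecidableEq T] (U : V → V → Prop) (e : T → V × V) :
    ToggleConfig V T → ToggleConfig V T → Prop := fun c c' =>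
  (U c.1 c'.1 ∧ c'.2 = c.2) ∨
  (∃ t : T, c.1 = (dirOf e t (c.2 t)).1 ∧ c'.1 = (dirOf e t (c.2 t)).2 ∧
    c'.2 = Function.update c.2 t (!c.2 t))

/-- A walk in the 1-toggle system from configuration `c₀` to configuration `c₁`:
a nonempty list of configurations, consecutive ones related by `ToggleStep`. -/
def IsToggleWalk [DecidableEq T] (U : V → V → Prop) (e : T → V × V)
    (l : List (ToggleConfig V T)) (c₀ c₁ : ToggleConfig V T) : Prop :=
  l.Chain' (ToggleStep U e) ∧ l.head? = some c₀ ∧ l.getLast? = some c₁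

/-- Number of times the walk `l` traverses toggle `t` (number of consecutive pairs
whose orientation of `t` differs). -/
def travCount (l : List (ToggleConfig V T)) (t : T) : ℕ :=
  (l.zip l.tail).countP fun p => p.1.2 t != p.2.2 t

/-! Along any toggle walk from `s`, a toggle in reversed orientation has been traversed forwards,
so its initial tail is reachable from `s` in the mixed graph; traversing it backwards therefore
never leaves the set of vertices reachable in the mixed graph. Conversely, follow a mixed-graph
path without repeated vertices: a toggle is only used from its initial tail, which the path visits
once, so it is still in its initial orientation when used and flips at most once. -/

def mixedAdj (U : V → V → Prop) (e : T → V × V) (a b : V) : Prop :=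
  U a b ∨ ∃ tg, e tg = (a, b)

theorem Relation.ReflTransGen.exists_nodup_isChain_cons {α : Type*} {r : α → α → Prop}
    {a b : α} (h : Relation.ReflTransGen r a b) :
    ∃ l, (a :: l).IsChain r ∧ (a :: l).getLast (List.cons_ne_nil _ _) = b ∧
      (a :: l).Nodup := by
  induction h using Relation.ReflTransGen.head_induction_on with
  | refl => exact ⟨[], .singleton _, rfl, List.nodup_singleton _⟩
  | @head a c hac _ ih =>
    obtain ⟨l, hchain, hlast, hnodup⟩ := ih
    by_cases ha : a ∈ c :: l
    · obtain ⟨l₁, l₂, hsplit⟩ := List.mem_iff_append.mp ha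
      rw [hsplit] at hchain hnodup
      refine ⟨l₂, hchain.right_of_append, ?_, (List.nodup_append.mp hnodup).2.1⟩
      simp only [← hlast, hsplit, List.getLast_append_of_ne_nil _ (List.cons_ne_nil _ _)]
    · exact ⟨c :: l, hchain.cons_cons hac, by rwa [List.getLast_cons_cons], hnodup.cons ha⟩

theorem travCount_cons_le_of_isChain (tg : T) (a : ToggleConfig V T) (l : List (ToggleConfig V T))
    (hl : (a :: l).IsChain fun c c' => c.2 tg ≤ c'.2 tg) :
    travCount (a :: l) tg ≤ (!a.2 tg).toNat := by
  induction l generalizing a with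
  | nil => simp [travCount]
  | cons b l ih =>
    obtain ⟨hab, hl'⟩ := List.isChain_cons_cons.mp hl
    have hsplit : travCount (a :: b :: l) tg =
        (a.2 tg != b.2 tg).toNat + travCount (b :: l) tg := by
      simp only [travCount, List.tail_cons, List.zip_cons_cons, List.countP_cons]
      cases a.2 tg != b.2 tg <;> simp [add_comm]
    have hrest := ih b hl'
    rw [hsplit]
    revert hab hrest
    cases a.2 tg <;> cases b.2 tg <;> simp

theorem travCount_le_one_of_isChain (tg : T) {l : List (ToggleConfig V T)}
    (hl : l.IsChain fun c c' => c.2 tg ≤ c'.2 tg) : travCount l tg ≤ 1 := by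
  cases l with
  | nil => simp [travCount]
  | cons a l => exact (travCount_cons_le_of_isChain tg a l hl).trans (Bool.toNat_le _)

section Walks

variable [DecidableEq T] {U : V → V → Prop} {e : T → V × V}

theorem IsToggleWalk.reflTransGen {l : List (ToggleConfig V T)} {c₀ c₁ : ToggleConfig V T}
    (hl : IsToggleWalk U e l c₀ c₁) : Relation.ReflTransGen (ToggleStep U e) c₀ c₁ := by
  obtain ⟨hchain, hhead, hlast⟩ := hl
  cases l with
  | nil => simp at hhead
  | cons a l =>
    obtain rfl : a = c₀ := Option.some_inj.mp hhead
    refine List.relationReflTransGen_of_exists_isChain_cons l hchain ?_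
    rw [List.getLast?_eq_some_getLast (List.cons_ne_nil _ _)] at hlast
    exact Option.some_inj.mp hlast

def MixedReachable (U : V → V → Prop) (e : T → V × V) (s : V) (c : ToggleConfig V T) :
    Prop :=
  Relation.ReflTransGen (mixedAdj U e) s c.1 ∧
    ∀ tg, c.2 tg = true → Relation.ReflTransGen (mixedAdj U e) s (e tg).1

theorem MixedReachable.of_toggleStep {s : V} {c c' : ToggleConfig V T}
    (hc : MixedReachable U e s c) (hstep : ToggleStep U e c c') : MixedReachable U e s c' := by
  obtain ⟨hvertex, hreversed⟩ := hc
  rcases hstep with ⟨hU, hσ⟩ | ⟨tg, hfrom, hto, hσ⟩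
  · exact ⟨hvertex.tail (Or.inl hU), hσ ▸ hreversed⟩
  · have hother : ∀ tg', tg' ≠ tg → c'.2 tg' = true →
        Relation.ReflTransGen (mixedAdj U e) s (e tg').1 := fun tg' hne ht' =>
      hreversed tg' (by rwa [hσ, Function.update_of_ne hne] at ht')
    cases hb : c.2 tg
    · simp only [hb, dirOf, Bool.false_eq_true, if_false] at hfrom hto hσ
      refine ⟨hvertex.tail (Or.inr ⟨tg, Prod.ext hfrom.symm hto.symm⟩), fun tg' ht' => ?_⟩
      by_cases hne : tg' = tg
      · exact hne ▸ hfrom ▸ hvertex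
      · exact hother tg' hne ht'
    · simp only [hb, dirOf, if_true] at hto hσ
      refine ⟨hto ▸ hreversed tg hb, fun tg' ht' => hother tg' ?_ ht'⟩
      rintro rfl
      simp [hσ] at ht'

theorem MixedReachable.of_reflTransGen {s : V} {c c' : ToggleConfig V T}
    (hc : MixedReachable U e s c) (h : Relation.ReflTransGen (ToggleStep U e) c c') :
    MixedReachable U e s c' := by
  induction h with
  | refl => exact hc
  | tail _ hstep ih => exact ih.of_toggleStep hstep

theorem reflTransGen_mixedAdj_of_isToggleWalk {l : List (ToggleConfig V T)} {s t : V}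
    {σ : T → Bool} (hl : IsToggleWalk U e l (s, fun _ => false) (t, σ)) :
    Relation.ReflTransGen (mixedAdj U e) s t :=
  (MixedReachable.of_reflTransGen (c := (s, fun _ => false))
    ⟨.refl, fun _ h => absurd h Bool.false_ne_true⟩ hl.reflTransGen).1

def MonoToggleStep (U : V → V → Prop) (e : T → V × V) (c c' : ToggleConfig V T) : Prop :=
  ToggleStep U e c c' ∧ c.2 ≤ c'.2

theorem exists_monoToggleStep {v w : V} {σ : T → Bool} (hvw : mixedAdj U e v w)
    (hσ : ∀ tg, σ tg = true → (e tg).1 ≠ v) :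
    ∃ σ', MonoToggleStep U e (v, σ) (w, σ') ∧
      ∀ tg, σ' tg = true → σ tg = true ∨ (e tg).1 = v := by
  rcases hvw with hU | ⟨tg, htg⟩
  · exact ⟨σ, ⟨Or.inl ⟨hU, rfl⟩, le_rfl⟩, fun _ h => Or.inl h⟩
  · have hσtg : σ tg = false := Bool.eq_false_iff.mpr fun h => hσ tg h (by rw [htg])
    refine ⟨Function.update σ tg true, ⟨Or.inr ⟨tg, ?_, ?_, ?_⟩, ?_⟩, fun tg' h => ?_⟩
    · simp [dirOf, hσtg, htg]
    · simp [dirOf, hσtg, htg]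
    · simp [hσtg]
    · exact le_update_iff.mpr ⟨Bool.le_true _, fun _ _ => le_rfl⟩
    · by_cases hne : tg' = tg
      · exact Or.inr (by rw [hne, htg])
      · exact Or.inl (by rwa [Function.update_of_ne hne] at h)

theorem exists_reflTransGen_monoToggleStep_of_nodup (l : List V) :
    ∀ (v : V) (σ : T → Bool), (v :: l).IsChain (mixedAdj U e) → (v :: l).Nodup →
      (∀ tg, σ tg = true → (e tg).1 ∉ v :: l) →
      ∃ σ', Relation.ReflTransGen (MonoToggleStep U e) (v, σ)
        ((v :: l).getLast (List.cons_ne_nil _ _), σ') := by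
  induction l with
  | nil => exact fun v σ _ _ _ => ⟨σ, .refl⟩
  | cons w l ih =>
    intro v σ hchain hnodup hσ
    obtain ⟨hvw, hchain'⟩ := List.isChain_cons_cons.mp hchain
    obtain ⟨hv, hnodup'⟩ := List.nodup_cons.mp hnodup
    obtain ⟨σ₁, hstep, hσ₁⟩ :=
      exists_monoToggleStep hvw fun tg ht heq => hσ tg ht (heq ▸ List.mem_cons_self)
    have hfresh : ∀ tg, σ₁ tg = true → (e tg).1 ∉ w :: l := fun tg ht => by
      rcases hσ₁ tg ht with hold | hv'
      · exact fun hmem => hσ tg hold (List.mem_cons_of_mem _ hmem)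
      · exact hv' ▸ hv
    obtain ⟨σ', hrest⟩ := ih w σ₁ hchain' hnodup' hfresh
    exact ⟨σ', .head hstep (by rwa [List.getLast_cons_cons])⟩

theorem exists_isToggleWalk_travCount_le_one {s t : V}
    (h : Relation.ReflTransGen (mixedAdj U e) s t) :
    ∃ (l : List (ToggleConfig V T)) (σ : T → Bool),
      IsToggleWalk U e l (s, fun _ => false) (t, σ) ∧ ∀ tg, travCount l tg ≤ 1 := by
  obtain ⟨path, hpath, hlast, hnodup⟩ := h.exists_nodup_isChain_cons
  obtain ⟨σ, hmono⟩ := exists_reflTransGen_monoToggleStep_of_nodup path s (fun _ => false)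
    hpath hnodup fun _ h => absurd h Bool.false_ne_true
  rw [hlast] at hmono
  obtain ⟨l, hchain, hlast'⟩ := List.exists_isChain_cons_of_relationReflTransGen hmono
  refine ⟨_ :: l, σ, ⟨hchain.imp fun _ _ => And.left, rfl, ?_⟩,
    fun tg => travCount_le_one_of_isChain tg (hchain.imp fun _ _ h => h.2 tg)⟩
  rw [List.getLast?_eq_some_getLast (List.cons_ne_nil _ _), hlast']

end Walks

theorem toggle_system_mixed_graph_general [DecidableEq T] (U : V → V → Prop)
    (e : T → V × V) (s t : V) :
    (∀ (l : List (ToggleConfig V T)) (σ : T → Bool),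
      IsToggleWalk U e l (s, fun _ => false) (t, σ) →
      ∃ (l' : List (ToggleConfig V T)) (σ' : T → Bool),
        IsToggleWalk U e l' (s, fun _ => false) (t, σ') ∧ ∀ tg, travCount l' tg ≤ 1) ∧
    ((∃ (l : List (ToggleConfig V T)) (σ : T → Bool),
        IsToggleWalk U e l (s, fun _ => false) (t, σ)) ↔
      Relation.ReflTransGen (fun a b => U a b ∨ ∃ tg, e tg = (a, b)) s t) := by
  refine ⟨fun _ _ hl => exists_isToggleWalk_travCount_le_one
      (reflTransGen_mixedAdj_of_isToggleWalk hl),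
    fun ⟨_, _, hl⟩ => reflTransGen_mixedAdj_of_isToggleWalk hl, fun h => ?_⟩
  obtain ⟨l, σ, hl, -⟩ := exists_isToggleWalk_travCount_le_one h
  exact ⟨l, σ, hl⟩

/-- if there is a walk from `s` to `t` in a 1-toggle system (starting with
all toggles in their initial orientation), then there is such a walk traversing each
toggle at most once; consequently `t` is reachable from `s` in the toggle system iff
`t` is reachable from `s` in the mixed graph obtained by treating each toggle as a
static directed edge in its initial orientation. -/
theorem toggle_system_mixed_graph [DecidableEq T] (U : V → V → Prop) (hU : Symmetric U)
    (e : T → V × V) (s t : V) :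
    (∀ (l : List (ToggleConfig V T)) (σ : T → Bool),
      IsToggleWalk U e l (s, fun _ => false) (t, σ) →
      ∃ (l' : List (ToggleConfig V T)) (σ' : T → Bool),
        IsToggleWalk U e l' (s, fun _ => false) (t, σ') ∧ ∀ tg, travCount l' tg ≤ 1) ∧
    ((∃ (l : List (ToggleConfig V T)) (σ : T → Bool),
        IsToggleWalk U e l (s, fun _ => false) (t, σ)) ↔
      Relation.ReflTransGen (fun a b => U a b ∨ ∃ tg, e tg = (a, b)) s t) :=
  toggle_system_mixed_graph_general U e s t

end
end

section
/- Given a walk in a 1-toggle system that traverses some toggle more than once, there exists a strictly shorter walk between the same start and end vertices achieving the same final vertex. Hence a shortest walk between two vertices traverses every toggle at most once. -/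
section
variable (V T : Type*)

variable {V T}

/-! Suppose the first step of a walk traverses a toggle `t`, the rest of the walk traverses `t`
again, and no toggle is traversed twice after the first step (peeling steps off the front of
the walk reaches this situation). Until its second traversal `t` keeps its reversed
orientation, so that traversal leads back to the start vertex. The walk after it uses only
toggles that were not traversed before, hence still carry their initial orientation; resetting
all other toggles to the start configuration turns it into a strictly shorter walk from the
start configuration to the same final vertex. -/

lemma travCount_cons_cons_of_eq {a b : ToggleConfig V T} {t : T} (h : a.2 t = b.2 t)
    (l : List (ToggleConfig V T)) : travCount (a :: b :: l) t = travCount (b :: l) t := by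
  simp [travCount, h]

lemma travCount_cons_cons_of_ne {a b : ToggleConfig V T} {t : T} (h : a.2 t ≠ b.2 t)
    (l : List (ToggleConfig V T)) : travCount (a :: b :: l) t = travCount (b :: l) t + 1 := by
  simp [travCount, h]

lemma travCount_le_cons_cons (a b : ToggleConfig V T) (l : List (ToggleConfig V T)) (t : T) :
    travCount (b :: l) t ≤ travCount (a :: b :: l) t := by
  by_cases h : a.2 t = b.2 t
  · rw [travCount_cons_cons_of_eq h]
  · rw [travCount_cons_cons_of_ne h]; omega

lemma dirOf_not_snd (e : T → V × V) (t : T) (b : Bool) :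
    (dirOf e t (!b)).2 = (dirOf e t b).1 := by
  cases b <;> rfl

def flipToggles (m : T → Bool) (c : ToggleConfig V T) : ToggleConfig V T :=
  (c.1, fun u => c.2 u ^^ m u)

lemma flipToggles_xor_eq {c c₀ : ToggleConfig V T} (h : c.1 = c₀.1) :
    flipToggles (fun u => c.2 u ^^ c₀.2 u) c = c₀ := by
  ext u
  · exact h
  · simp [flipToggles]

section
variable [DecidableEq T] {U : V → V → Prop} {e : T → V × V} {c c' : ToggleConfig V T}

lemma ToggleStep.traverses_of_bit_ne (hstep : ToggleStep U e c c') {t : T}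
    (ht : c.2 t ≠ c'.2 t) :
    c.1 = (dirOf e t (c.2 t)).1 ∧ c'.1 = (dirOf e t (c.2 t)).2 ∧
      c'.2 = Function.update c.2 t (!c.2 t) := by
  rcases hstep with ⟨-, hbits⟩ | ⟨s, hsrc, htgt, hbits⟩
  · exact absurd (congrFun hbits t).symm ht
  · obtain rfl : s = t := by
      by_contra hst
      exact ht (by rw [hbits, Function.update_of_ne (Ne.symm hst)])
    exact ⟨hsrc, htgt, hbits⟩

lemma ToggleStep.bit_eq_of_bit_ne (hstep : ToggleStep U e c c') {s t : T}
    (ht : c.2 t ≠ c'.2 t) (hst : s ≠ t) : c.2 s = c'.2 s := by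
  rw [(hstep.traverses_of_bit_ne ht).2.2, Function.update_of_ne hst]

lemma ToggleStep.map_flipToggles (hstep : ToggleStep U e c c') {m : T → Bool}
    (hm : ∀ s, c.2 s ≠ c'.2 s → m s = false) :
    ToggleStep U e (flipToggles m c) (flipToggles m c') := by
  rcases hstep with ⟨hU, hbits⟩ | ⟨t, hsrc, htgt, hbits⟩
  · exact Or.inl ⟨hU, by simp [flipToggles, hbits]⟩
  · have hmt : m t = false := hm t (by simp [hbits])
    refine Or.inr ⟨t, ?_, ?_, ?_⟩
    · simpa [flipToggles, hmt] using hsrc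
    · simpa [flipToggles, hmt] using htgt
    · funext u
      by_cases hu : u = t
      · subst hu; simp [flipToggles, hbits, hmt]
      · simp [flipToggles, hbits, Function.update_of_ne hu]

lemma List.IsChain.map_flipToggles {l : List (ToggleConfig V T)}
    (hl : l.IsChain (ToggleStep U e)) {m : T → Bool}
    (hm : ∀ s, travCount l s ≠ 0 → m s = false) :
    (l.map (flipToggles m)).IsChain (ToggleStep U e) := by
  induction hl with
  | nil => exact .nil
  | singleton => exact .singleton _
  | @cons_cons a b l hab _ ih =>
    refine .cons_cons (hab.map_flipToggles fun s hs => hm s ?_) (ih fun s hs => hm s ?_)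
    · simp [travCount_cons_cons_of_ne hs]
    · by_cases hab : a.2 s = b.2 s
      · rwa [travCount_cons_cons_of_eq hab]
      · simp [travCount_cons_cons_of_ne hab]

lemma IsToggleWalk.map_flipToggles {l : List (ToggleConfig V T)} {c₀ c₁ : ToggleConfig V T}
    (hw : IsToggleWalk U e l c₀ c₁) {m : T → Bool}
    (hm : ∀ s, travCount l s ≠ 0 → m s = false) :
    IsToggleWalk U e (l.map (flipToggles m)) (flipToggles m c₀) (flipToggles m c₁) :=
  ⟨List.IsChain.map_flipToggles hw.1 hm, by simp [hw.2.1], by simp [hw.2.2]⟩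

lemma IsToggleWalk.exists_eq_cons {l : List (ToggleConfig V T)} {c₀ c₁ : ToggleConfig V T}
    (hw : IsToggleWalk U e l c₀ c₁) : ∃ l₀, l = c₀ :: l₀ :=
  List.head?_eq_some_iff.mp hw.2.1

lemma isToggleWalk_cons_cons_iff {c d c₀ c₁ : ToggleConfig V T} {l : List (ToggleConfig V T)} :
    IsToggleWalk U e (c :: d :: l) c₀ c₁ ↔
      c = c₀ ∧ ToggleStep U e c d ∧ IsToggleWalk U e (d :: l) d c₁ := by
  change (c :: d :: l).IsChain _ ∧ _ ↔ _ ∧ _ ∧ (d :: l).IsChain _ ∧ _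
  simp only [List.isChain_cons_cons, List.head?_cons, Option.some.injEq,
    List.getLast?_cons_cons, true_and]
  tauto

/-- The next traversal of `t` ends at the vertex of `c₀`, and no toggle used after it has a
bit that differs between `c₀` and the current configuration; so the rest of the walk after
that traversal, with its bits moved to those of `c₀` by `flipToggles`, is a walk from `c₀`. -/
theorem exists_shorter_walk_of_anchor (t : T) (c₀ : ToggleConfig V T) :
    ∀ (l : List (ToggleConfig V T)) (c c₁ : ToggleConfig V T), IsToggleWalk U e l c c₁ →
      c₀.1 = (dirOf e t (c.2 t)).2 → travCount l t ≠ 0 → (∀ s, travCount l s ≤ 1) →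
      (∀ s, s ≠ t → travCount l s ≠ 0 → c₀.2 s = c.2 s) →
      ∃ (l' : List (ToggleConfig V T)) (σ' : T → Bool),
        IsToggleWalk U e l' c₀ (c₁.1, σ') ∧ l'.length < l.length
  | [], _, _, hw, _, _, _, _ => by simp [IsToggleWalk] at hw
  | [_], _, _, _, _, ht, _, _ => by simp [travCount] at ht
  | c :: d :: l, _, c₁, hw, hanchor, ht, hle, hbits => by
    obtain ⟨rfl, hstep, hw⟩ := isToggleWalk_cons_cons_iff.mp hw
    by_cases hcd : c.2 t = d.2 t
    · rw [travCount_cons_cons_of_eq hcd] at ht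
      have hle' : ∀ s, travCount (d :: l) s ≤ 1 := fun s =>
        (travCount_le_cons_cons c d l s).trans (hle s)
      have hbits' : ∀ s, s ≠ t → travCount (d :: l) s ≠ 0 → c₀.2 s = d.2 s := by
        intro s hst hs
        have hcds : c.2 s = d.2 s := by
          by_contra hcds
          have := hle s
          rw [travCount_cons_cons_of_ne hcds] at this
          omega
        rw [← hcds]
        exact hbits s hst (by have := travCount_le_cons_cons c d l s; omega)
      obtain ⟨l', σ', hw', hlen⟩ :=
        exists_shorter_walk_of_anchor t c₀ (d :: l) d c₁ hw (hcd ▸ hanchor) ht hle' hbits'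
      exact ⟨l', σ', hw', by simp only [List.length_cons] at hlen ⊢; omega⟩
    · have hd : d.1 = c₀.1 := by rw [hanchor, (hstep.traverses_of_bit_ne hcd).2.1]
      have hm : ∀ s, travCount (d :: l) s ≠ 0 → (d.2 s ^^ c₀.2 s) = false := by
        intro s hs
        have hst : s ≠ t := by
          rintro rfl
          have := hle s
          rw [travCount_cons_cons_of_ne hcd] at this
          omega
        have hcds := hstep.bit_eq_of_bit_ne hcd hst
        rw [← hcds, hbits s hst (by have := travCount_le_cons_cons c d l s; omega)]
        simp
      refine ⟨_, _, flipToggles_xor_eq hd ▸ hw.map_flipToggles hm, by simp⟩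

theorem exists_shorter_walk_of_two_le_travCount :
    ∀ (l : List (ToggleConfig V T)) (c₀ c₁ : ToggleConfig V T) (t : T),
      IsToggleWalk U e l c₀ c₁ → 2 ≤ travCount l t →
      ∃ (l' : List (ToggleConfig V T)) (σ' : T → Bool),
        IsToggleWalk U e l' c₀ (c₁.1, σ') ∧ l'.length < l.length
  | [], _, _, _, hw, _ => by simp [IsToggleWalk] at hw
  | [_], _, _, _, _, ht => by simp [travCount] at ht
  | c :: d :: l, c₀, c₁, t, hw, ht => by
    obtain ⟨rfl, hstep, hw⟩ := isToggleWalk_cons_cons_iff.mp hw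
    by_cases hrep : ∃ s, 2 ≤ travCount (d :: l) s
    · obtain ⟨s, hs⟩ := hrep
      obtain ⟨l', σ', hw', hlen⟩ := exists_shorter_walk_of_two_le_travCount (d :: l) d c₁ s hw hs
      obtain ⟨l₀, rfl⟩ := hw'.exists_eq_cons
      refine ⟨c :: d :: l₀, σ', ?_, by simpa using hlen⟩
      exact isToggleWalk_cons_cons_iff.mpr ⟨rfl, hstep, hw'⟩
    · push Not at hrep
      have hct : c.2 t ≠ d.2 t := fun h => by
        rw [travCount_cons_cons_of_eq h] at ht
        exact (hrep t).not_ge ht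
      rw [travCount_cons_cons_of_ne hct] at ht
      obtain ⟨hsrc, -, hbits⟩ := hstep.traverses_of_bit_ne hct
      have hanchor : c.1 = (dirOf e t (d.2 t)).2 := by
        rw [hbits, Function.update_self, dirOf_not_snd, ← hsrc]
      obtain ⟨l', σ', hw', hlen⟩ := exists_shorter_walk_of_anchor t c (d :: l) d c₁ hw hanchor
        (by omega) (fun s => Nat.le_of_lt_succ (hrep s))
        (fun s hst _ => hstep.bit_eq_of_bit_ne hct hst)
      exact ⟨l', σ', hw', by simp only [List.length_cons] at hlen ⊢; omega⟩

end

theorem repeated_toggle_shorter_walk_general [DecidableEq T] (U : V → V → Prop)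
    (e : T → V × V) (c₀ : ToggleConfig V T) (tv : V) :
    (∀ (l : List (ToggleConfig V T)) (σ : T → Bool) (tg : T),
      IsToggleWalk U e l c₀ (tv, σ) → 2 ≤ travCount l tg →
      ∃ (l' : List (ToggleConfig V T)) (σ' : T → Bool),
        IsToggleWalk U e l' c₀ (tv, σ') ∧ l'.length < l.length) ∧
    (∀ (l : List (ToggleConfig V T)) (σ : T → Bool),
      IsToggleWalk U e l c₀ (tv, σ) →
      (∀ (l' : List (ToggleConfig V T)) (σ' : T → Bool),
        IsToggleWalk U e l' c₀ (tv, σ') → l.length ≤ l'.length) →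
      ∀ tg, travCount l tg ≤ 1) := by
  refine ⟨fun l σ tg hw h2 => exists_shorter_walk_of_two_le_travCount l c₀ (tv, σ) tg hw h2,
    fun l σ hw hmin tg => ?_⟩
  by_contra! h
  obtain ⟨l', σ', hw', hlen⟩ := exists_shorter_walk_of_two_le_travCount l c₀ (tv, σ) tg hw h
  exact (hmin l' σ' hw').not_gt hlen

/-- a walk in a 1-toggle system that traverses some toggle more than once
can be replaced by a strictly shorter walk with the same start configuration and the
same final vertex; hence a shortest walk between two vertices traverses every toggle
at most once. -/
theorem repeated_toggle_shorter_walk [DecidableEq T] (U : V → V → Prop)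
    (hU : Symmetric U) (e : T → V × V) (c₀ : ToggleConfig V T) (tv : V) :
    (∀ (l : List (ToggleConfig V T)) (σ : T → Bool) (tg : T),
      IsToggleWalk U e l c₀ (tv, σ) → 2 ≤ travCount l tg →
      ∃ (l' : List (ToggleConfig V T)) (σ' : T → Bool),
        IsToggleWalk U e l' c₀ (tv, σ') ∧ l'.length < l.length) ∧
    (∀ (l : List (ToggleConfig V T)) (σ : T → Bool),
      IsToggleWalk U e l c₀ (tv, σ) →
      (∀ (l' : List (ToggleConfig V T)) (σ' : T → Bool),
        IsToggleWalk U e l' c₀ (tv, σ') → l.length ≤ l'.length) →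
      ∀ tg, travCount l tg ≤ 1) :=
  repeated_toggle_shorter_walk_general U e c₀ tv

end
end

section
/- The state space of a 2-state k-tunnel deterministic reversible gadget is determined by assigning to each of the k tunnels one of the types: trivial (always open both ways or always closed), lock, toggle, or tripwire; conversely, any such assignment yields a deterministic reversible 2-state k-tunnel gadget. -/
/-! Restricted to one tunnel, a gadget is a relation `P s d s'` on two states and two
directions. Reversibility makes `P` determined by the states in which the tunnel can be crossed
without changing state, together with the set of values `xor s d` of the state-flipping
crossings `(s, d)`. Determinism forbids having both kinds, since every state admits a flipping
crossing of each class; each of the remaining combinations is one of the five tunnel types. -/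

section
/- A 2-state `k`-tunnel gadget: states are `Bool`, locations are `Fin k × Bool`
(the two ends of each of the `k` tunnels), and every traversal crosses a tunnel
(from one end `(i, d)` to the other end `(i, !d)`). -/
variable {k : ℕ}

/-- Tunnel `i` is trivial: always open in both directions with no state change,
or never traversable. -/
def TrivialTunnel (tr : Bool × (Fin k × Bool) → Bool × (Fin k × Bool) → Prop)
    (i : Fin k) : Prop :=
  (∀ s d s', tr (s, (i, d)) (s', (i, !d)) ↔ s' = s) ∨
  (∀ s d s', ¬ tr (s, (i, d)) (s', (i, !d)))

/-- Tunnel `i` is a lock: open in both directions in state `s₀` (without changing the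
state) and closed in the other state. -/
def LockTunnel (tr : Bool × (Fin k × Bool) → Bool × (Fin k × Bool) → Prop)
    (i : Fin k) : Prop :=
  ∃ s₀ : Bool, ∀ s d s', tr (s, (i, d)) (s', (i, !d)) ↔ (s = s₀ ∧ s' = s)

/-- Tunnel `i` is a toggle: in each state it is traversable in exactly one direction
(opposite directions in the two states), and traversing it flips the state. -/
def ToggleTunnel (tr : Bool × (Fin k × Bool) → Bool × (Fin k × Bool) → Prop)
    (i : Fin k) : Prop :=
  ∃ d₀ : Bool, ∀ s d s', tr (s, (i, d)) (s', (i, !d)) ↔ (d = xor s d₀ ∧ s' = !s)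

/-- Tunnel `i` is a tripwire: traversable in both directions in both states, and every
traversal flips the state. -/
def TripwireTunnel (tr : Bool × (Fin k × Bool) → Bool × (Fin k × Bool) → Prop)
    (i : Fin k) : Prop :=
  ∀ s d s', tr (s, (i, d)) (s', (i, !d)) ↔ s' = !s

theorem Bool.forall_not_or_forall_or_exists_iff_eq (p : Bool → Prop) :
    (∀ b, ¬ p b) ∨ (∀ b, p b) ∨ ∃ b₀, ∀ b, p b ↔ b = b₀ := by
  by_cases h₀ : p false <;> by_cases h₁ : p true
  · exact Or.inr (Or.inl (Bool.forall_bool.2 ⟨h₀, h₁⟩))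
  · exact Or.inr (Or.inr ⟨false, Bool.forall_bool.2 ⟨by simpa, by simpa⟩⟩)
  · exact Or.inr (Or.inr ⟨true, Bool.forall_bool.2 ⟨by simpa, by simpa⟩⟩)
  · exact Or.inl (Bool.forall_bool.2 ⟨h₀, h₁⟩)

namespace TwoStateTunnel

def crossing (tr : Bool × (Fin k × Bool) → Bool × (Fin k × Bool) → Prop) (i : Fin k)
    (s d s' : Bool) : Prop :=
  tr (s, (i, d)) (s', (i, !d))

def Deterministic (P : Bool → Bool → Bool → Prop) : Prop :=
  ∀ s d s₁ s₂, P s d s₁ → P s d s₂ → s₁ = s₂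

def Reversible (P : Bool → Bool → Bool → Prop) : Prop :=
  ∀ s d s', P s d s' → P s' (!d) s

section Relation

variable {P : Bool → Bool → Bool → Prop}

/-- Reversal maps a flipping crossing `(s, d)` to `(!s, !d)`, which preserves `xor s d`. -/
theorem Reversible.crossing_iff (hrev : Reversible P) (s d s' : Bool) :
    P s d s' ↔ (s' = s ∧ P s false s) ∨ (s' = !s ∧ P false (xor s d) true) := by
  cases s <;> cases d <;> cases s' <;> simp <;> exact ⟨hrev _ _ _, hrev _ _ _⟩

theorem not_flip_of_stay (hdet : Deterministic P) (hrev : Reversible P) {s : Bool}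
    (hs : P s false s) (e : Bool) : ¬ P false e true := fun he => by
  have hflip : P s (xor s e) (!s) := (hrev.crossing_iff _ _ _).2 (Or.inr ⟨rfl, by simpa⟩)
  have hstay : P s (xor s e) s := (hrev.crossing_iff _ _ _).2 (Or.inl ⟨rfl, hs⟩)
  exact Bool.not_ne_self s (hdet _ _ _ _ hflip hstay)

theorem deterministic_and_reversible_iff :
    Deterministic P ∧ Reversible P ↔
      ((∀ s d s', P s d s' ↔ s' = s) ∨ (∀ s d s', ¬ P s d s')) ∨
      (∃ s₀ : Bool, ∀ s d s', P s d s' ↔ (s = s₀ ∧ s' = s)) ∨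
      (∃ d₀ : Bool, ∀ s d s', P s d s' ↔ (d = xor s d₀ ∧ s' = !s)) ∨
      (∀ s d s', P s d s' ↔ s' = !s) := by
  refine ⟨fun ⟨hdet, hrev⟩ => ?_, ?_⟩
  · rcases Bool.forall_not_or_forall_or_exists_iff_eq (fun s => P s false s)
      with hstay | hstay | ⟨s₀, hstay⟩ <;>
    rcases Bool.forall_not_or_forall_or_exists_iff_eq (fun e => P false e true)
      with hflip | hflip | ⟨e₀, hflip⟩
    · refine Or.inl (Or.inr fun s d s' => ?_)
      rw [hrev.crossing_iff]; simp [hstay, hflip]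
    · refine Or.inr (Or.inr (Or.inr fun s d s' => ?_))
      rw [hrev.crossing_iff]; simp [hstay, hflip]
    · refine Or.inr (Or.inr (Or.inl ⟨e₀, fun s d s' => ?_⟩))
      rw [hrev.crossing_iff]; cases s <;> simp [hstay, hflip, and_comm]
    · refine Or.inl (Or.inl fun s d s' => ?_)
      rw [hrev.crossing_iff]; simp [hstay, hflip]
    · exact absurd (hflip false) (not_flip_of_stay hdet hrev (hstay false) false)
    · exact absurd ((hflip e₀).2 rfl) (not_flip_of_stay hdet hrev (hstay false) e₀)
    · refine Or.inr (Or.inl ⟨s₀, fun s d s' => ?_⟩)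
      rw [hrev.crossing_iff]; simp [hstay, hflip, and_comm]
    · exact absurd (hflip false) (not_flip_of_stay hdet hrev ((hstay s₀).2 rfl) false)
    · exact absurd ((hflip e₀).2 rfl) (not_flip_of_stay hdet hrev ((hstay s₀).2 rfl) e₀)
  · rintro ((h | h) | ⟨s₀, h⟩ | ⟨d₀, h⟩ | h) <;>
      refine ⟨fun s d s₁ s₂ => ?_, fun s d s' => ?_⟩ <;> simp only [h] <;>
      cases s <;> cases d <;> (try cases s₁) <;> (try cases s₂) <;> (try cases s') <;>
      (try cases s₀) <;> (try cases d₀) <;> simp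

end Relation

section Gadget

variable {tr : Bool × (Fin k × Bool) → Bool × (Fin k × Bool) → Prop}
  (htunnel : ∀ s p s' q, tr (s, p) (s', q) → q.1 = p.1 ∧ q.2 = !p.2)
include htunnel

theorem exists_crossing_of_tr {s : Bool} {i : Fin k} {d : Bool} {y : Bool × (Fin k × Bool)}
    (h : tr (s, (i, d)) y) : ∃ s', y = (s', (i, !d)) ∧ crossing tr i s d s' := by
  obtain ⟨s', j, e⟩ := y
  obtain ⟨hj, he⟩ := htunnel _ _ _ _ h
  dsimp only at hj he
  subst hj he
  exact ⟨s', rfl, h⟩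

theorem deterministic_iff_forall_crossing :
    (∀ x y y', tr x y → tr x y' → y = y') ↔ ∀ i, Deterministic (crossing tr i) := by
  refine ⟨fun hdet i s d s₁ s₂ h₁ h₂ => congrArg Prod.fst (hdet _ _ _ h₁ h₂), ?_⟩
  rintro hdet ⟨s, i, d⟩ y y' h h'
  obtain ⟨s₁, rfl, h₁⟩ := exists_crossing_of_tr htunnel h
  obtain ⟨s₂, rfl, h₂⟩ := exists_crossing_of_tr htunnel h'
  rw [hdet i s d s₁ s₂ h₁ h₂]

theorem reversible_iff_forall_crossing :
    (∀ x y, tr x y → tr y x) ↔ ∀ i, Reversible (crossing tr i) := by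
  refine ⟨fun hrev i s d s' h => ?_, ?_⟩
  · simpa [crossing] using hrev _ _ h
  rintro hrev ⟨s, i, d⟩ y h
  obtain ⟨s', rfl, h'⟩ := exists_crossing_of_tr htunnel h
  simpa [crossing] using hrev i s d s' h'

end Gadget

end TwoStateTunnel

/-- a 2-state `k`-tunnel gadget (all of whose traversals cross tunnels) is
deterministic and reversible if and only if each of its `k` tunnels is trivial, a lock,
a toggle, or a tripwire.  In particular the state space of a deterministic reversible
2-state `k`-tunnel gadget is determined by such an assignment of tunnel types, and
conversely any such assignment yields a deterministic reversible gadget. -/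
theorem two_state_tunnel_classification
    (tr : Bool × (Fin k × Bool) → Bool × (Fin k × Bool) → Prop)
    (htunnel : ∀ s p s' q, tr (s, p) (s', q) → q.1 = p.1 ∧ q.2 = !p.2) :
    ((∀ x y y', tr x y → tr x y' → y = y') ∧ (∀ x y, tr x y → tr y x)) ↔
    (∀ i : Fin k,
      TrivialTunnel tr i ∨ LockTunnel tr i ∨ ToggleTunnel tr i ∨ TripwireTunnel tr i) := by
  rw [TwoStateTunnel.deterministic_iff_forall_crossing htunnel,
    TwoStateTunnel.reversible_iff_forall_crossing htunnel, ← forall_and]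
  exact forall_congr' fun i => TwoStateTunnel.deterministic_and_reversible_iff

end
end

section
/- The crossover gadget construction from four stacked tripwire-lock-tripwire gadgets, arranged so that each of the four straight paths (left-right and top-bottom) passes through the two tripwire tunnels of the two SWLWs whose lock tunnels lie on the orthogonal paths, permits exactly the straight-through traversals (left to right, right to left, top to bottom, bottom to top) and returns the system to its initial state after each traversal. -/
/-- Locations of the crossover construction built from four stacked
tripwire-lock-tripwire (SWLW) gadgets.  `ext d` is the external location on side `d`
(`d : ZMod 4`, opposite sides differ by 2); `a d` is the point after the lock tunnel of
side `d`'s SWLW; `b d` the point after the first tripwire; `center` the 4-way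
intersection. -/
inductive CrossPos : Type
  | ext (d : ZMod 4)
  | a (d : ZMod 4)
  | b (d : ZMod 4)
  | center

/-- The state assigns to each of the four SWLWs whether it is locked (`true`).
Side `d`'s path runs: `ext d` —(lock tunnel of SWLW `d`, passable iff unlocked,
state unchanged)— `a d` —(a tripwire of SWLW `d+1`, flips it)— `b d` —(a tripwire of
SWLW `d+3`, flips it)— `center`.  All moves are reversible. -/
def CrossStep : ((ZMod 4 → Bool) × CrossPos) → ((ZMod 4 → Bool) × CrossPos) → Prop :=
  fun c c' =>
    (∃ d, c.1 d = false ∧ c'.1 = c.1 ∧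
      ((c.2 = .ext d ∧ c'.2 = .a d) ∨ (c.2 = .a d ∧ c'.2 = .ext d))) ∨
    (∃ d, c'.1 = Function.update c.1 (d + 1) (!c.1 (d + 1)) ∧
      ((c.2 = .a d ∧ c'.2 = .b d) ∨ (c.2 = .b d ∧ c'.2 = .a d))) ∨
    (∃ d, c'.1 = Function.update c.1 (d + 3) (!c.1 (d + 3)) ∧
      ((c.2 = .b d ∧ c'.2 = .center) ∨ (c.2 = .center ∧ c'.2 = .b d)))

/-! Every configuration reachable from `ext d` with all locks open lies in the explicit set
`CrossStep.Invariant d`, which is closed under steps (a finite check). The decisive case: leaving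
the centre, whose locks `d + 1` and `d + 3` are closed, towards a side `e` off the axis of `d`
trips the locks `e + 3` and `e + 1`, which are `d` and `d + 2`; so at `a e` every lock is
closed, the lock tunnel of `e` in particular, and the robot cannot leave. Conversely the
straight traversal is an explicit six-step path. -/

deriving instance DecidableEq, Fintype for CrossPos

instance : DecidableRel CrossStep := fun _ _ => by
  unfold CrossStep; infer_instance

namespace CrossStep

def SameAxis (d e : ZMod 4) : Prop := e = d ∨ e = d + 2

instance (d e : ZMod 4) : Decidable (SameAxis d e) := by
  unfold SameAxis; infer_instance

def Invariant (d : ZMod 4) : (ZMod 4 → Bool) × CrossPos → Prop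
  | (σ, .ext e) => SameAxis d e ∧ σ = fun _ => false
  | (σ, .a e) => if SameAxis d e then σ = (fun _ => false) else σ = fun _ => true
  | (σ, .b e) =>
      if SameAxis d e then σ = (fun i => decide (i = e + 1)) else σ = fun i => !decide (i = e + 1)
  | (σ, .center) => σ = fun i => decide (i = d + 1) || decide (i = d + 3)

instance (d : ZMod 4) : DecidablePred (Invariant d) := fun
  | (_, .ext _) | (_, .a _) | (_, .b _) | (_, .center) => by unfold Invariant; infer_instance

theorem Invariant.step {d : ZMod 4} {c c' : (ZMod 4 → Bool) × CrossPos}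
    (hc : Invariant d c) (h : CrossStep c c') : Invariant d c' := by
  obtain ⟨σ, p⟩ := c
  obtain ⟨τ, q⟩ := c'
  rcases h with ⟨e, he, hτ, ⟨rfl, rfl⟩ | ⟨rfl, rfl⟩⟩ | ⟨e, hτ, ⟨rfl, rfl⟩ | ⟨rfl, rfl⟩⟩ |
    ⟨e, hτ, ⟨rfl, rfl⟩ | ⟨rfl, rfl⟩⟩ <;> dsimp only at hτ <;> subst τ <;>
    (try revert he) <;> revert hc σ e d <;> decide

theorem invariant_of_reflTransGen {d : ZMod 4} {c : (ZMod 4 → Bool) × CrossPos}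
    (h : Relation.ReflTransGen CrossStep ((fun _ => false), .ext d) c) : Invariant d c := by
  induction h with
  | refl => exact ⟨.inl rfl, rfl⟩
  | tail _ hs ih => exact ih.step hs

theorem reflTransGen_ext_add_two (d : ZMod 4) :
    Relation.ReflTransGen CrossStep ((fun _ => false), .ext d) ((fun _ => false), .ext (d + 2)) :=
  List.relationReflTransGen_of_exists_isChain_cons
    [((fun _ => false), .a d),
     ((fun i => decide (i = d + 1)), .b d),
     ((fun i => decide (i = d + 1) || decide (i = d + 3)), .center),
     ((fun i => decide (i = d + 3)), .b (d + 2)),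
     ((fun _ => false), .a (d + 2)),
     ((fun _ => false), .ext (d + 2))]
    (by revert d; decide) rfl

end CrossStep

/-- the crossover construction from four SWLWs (all initially unlocked)
permits exactly the straight-through traversals: starting at external side `d` in the
initial state, an external location `d'` can be reached (in some state `σ'`) if and
only if `d'` is `d` itself or the opposite side `d + 2`, and in either case the system
is back in its initial (all-unlocked) state. -/
theorem crossover_construction (d d' : ZMod 4) (σ' : ZMod 4 → Bool) :
    Relation.ReflTransGen CrossStep ((fun _ => false), .ext d) (σ', .ext d') ↔
      (σ' = (fun _ => false) ∧ (d' = d ∨ d' = d + 2)) := by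
  constructor
  · exact fun h => (CrossStep.invariant_of_reflTransGen h).symm
  · rintro ⟨rfl, rfl | rfl⟩
    · exact .refl
    · exact CrossStep.reflTransGen_ext_add_two d
end

section
/- In the construction of a crossing 2-toggle from two antiparallel 2-toggles, where the two AP2Ts are connected so that the exit of one tunnel of the first leads to the entrance of one tunnel of the second (forming two crossing paths), the composed system has exactly two states and in each state exactly two traversals are possible: from top-left to bottom-right and from top-right to bottom-left (or the reverses in the other state), with every traversal flipping the state. -/
/-- Locations of the construction of a crossing 2-toggle from two antiparallel
2-toggles: external locations `TL, TR, BL, BR` and internal connection points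
`M1, M2`. -/
inductive C2TLoc : Type
  | TL | TR | BL | BR | M1 | M2

/-- The first AP2T (state = first component, `false` initially) has antiparallel
toggle tunnels `TL–M1` (directed `TL→M1` in state `false`) and `M2–BL` (directed
`M2→BL` in state `false`); the second AP2T (second component) has tunnels `M1–BR`
(directed `M1→BR` in state `false`) and `TR–M2` (directed `TR→M2` in state `false`).
Traversing any tunnel flips its gadget's state. -/
def C2TStep : (Bool × Bool) × C2TLoc → (Bool × Bool) × C2TLoc → Prop := fun c c' =>
  (c.1.1 = false ∧ c.2 = .TL ∧ c'.2 = .M1 ∧ c'.1 = (true, c.1.2)) ∨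
  (c.1.1 = true ∧ c.2 = .M1 ∧ c'.2 = .TL ∧ c'.1 = (false, c.1.2)) ∨
  (c.1.1 = false ∧ c.2 = .M2 ∧ c'.2 = .BL ∧ c'.1 = (true, c.1.2)) ∨
  (c.1.1 = true ∧ c.2 = .BL ∧ c'.2 = .M2 ∧ c'.1 = (false, c.1.2)) ∨
  (c.1.2 = false ∧ c.2 = .M1 ∧ c'.2 = .BR ∧ c'.1 = (c.1.1, true)) ∨
  (c.1.2 = true ∧ c.2 = .BR ∧ c'.2 = .M1 ∧ c'.1 = (c.1.1, false)) ∨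
  (c.1.2 = false ∧ c.2 = .TR ∧ c'.2 = .M2 ∧ c'.1 = (c.1.1, true)) ∨
  (c.1.2 = true ∧ c.2 = .M2 ∧ c'.2 = .TR ∧ c'.1 = (c.1.1, false))

/-- The transition relation of a crossing 2-toggle in state `b`: in state `false`
the crossing traversals `TL→BR` and `TR→BL` are possible, in state `true` their
reverses. -/
def C2TTarget (b : Bool) (x y : C2TLoc) : Prop :=
  (b = false ∧ ((x = .TL ∧ y = .BR) ∨ (x = .TR ∧ y = .BL))) ∨
  (b = true ∧ ((x = .BR ∧ y = .TL) ∨ (x = .BL ∧ y = .TR)))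

/-! Every traversal of a toggle can be undone, and each connected component of the
configuration graph of the composed system is a path of at most three configurations, such as
`((false, false), TL) – ((true, false), M1) – ((true, true), BR)`. Hence every three-step walk
can be shortcut, a configuration is reachable iff it is reachable in at most two steps, and the
two-step walks between external locations are exactly the crossing traversals. -/

theorem Relation.reflTransGen_iff_of_three_steps_shortcut {α : Type*} {r : α → α → Prop}
    (h : ∀ a b, r a b → ∀ c, r b c → ∀ d, r c d → a = d ∨ r a d ∨ ∃ m, r a m ∧ r m d)
    {a d : α} :
    Relation.ReflTransGen r a d ↔ a = d ∨ r a d ∨ ∃ m, r a m ∧ r m d := by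
  constructor
  · intro had
    induction had with
    | refl => exact .inl rfl
    | tail _ hcd ih =>
      rcases ih with rfl | hac | ⟨m, ham, hmc⟩
      · exact .inr (.inl hcd)
      · exact .inr (.inr ⟨_, hac, hcd⟩)
      · exact h _ _ ham _ hmc _ hcd
  · rintro (rfl | had | ⟨m, ham, hmd⟩)
    · exact .refl
    · exact .single had
    · exact .head ham (.single hmd)

deriving instance DecidableEq for C2TLoc

instance : Fintype C2TLoc :=
  Fintype.ofList [.TL, .TR, .BL, .BR, .M1, .M2] fun x => by cases x <;> decide

instance : DecidableRel C2TStep := fun _ _ => by unfold C2TStep; infer_instance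

instance (b : Bool) (x y : C2TLoc) : Decidable (C2TTarget b x y) := by
  unfold C2TTarget; infer_instance

theorem c2tStep_three_steps_shortcut :
    ∀ a b, C2TStep a b → ∀ c, C2TStep b c → ∀ d, C2TStep c d →
      a = d ∨ C2TStep a d ∨ ∃ m, C2TStep a m ∧ C2TStep m d := by
  decide

/-- the composition of two antiparallel 2-toggles (synchronized, both in
state `b`) has exactly two states, and from an external location exactly the crossing
2-toggle traversals are possible (top-left to bottom-right and top-right to bottom-left
in one state, their reverses in the other), every traversal flipping the state. -/
theorem ap2t_simulates_c2t (b : Bool) (x y : C2TLoc) (σ' : Bool × Bool)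
    (hx : x ≠ .M1 ∧ x ≠ .M2) (hy : y ≠ .M1 ∧ y ≠ .M2) :
    Relation.ReflTransGen C2TStep ((b, b), x) (σ', y) ↔
      ((y = x ∧ σ' = (b, b)) ∨ (σ' = (!b, !b) ∧ C2TTarget b x y)) := by
  rw [Relation.reflTransGen_iff_of_three_steps_shortcut c2tStep_three_steps_shortcut]
  revert b x y σ'
  decide
end

section
/- If gadget set A simulates gadget g (there is a system of A-gadgets whose external transition behavior is equivalent to g) and gadget set B containing g simulates gadget h, then A together with the branching hallway simulates h. In particular, simulation of gadgets is transitive. -/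
/-- A gadget: a set of states with an initial state, a set of locations, and a
transition relation on (state, location) pairs. -/
structure Gadget : Type 1 where
  St : Type
  Loc : Type
  init : St
  tr : St × Loc → St × Loc → Prop

/-- The branching hallway: one state, three locations, always allowing traversal
between any two distinct locations. -/
def Gadget.hallway : Gadget where
  St := PUnit
  Loc := Fin 3
  init := PUnit.unit
  tr := fun p q => p.2 ≠ q.2

/-- A system of gadgets over a set `A` of gadget types: a collection of gadget
instances drawn from `A` with initial states, a partial matching `conn` of their
locations (the connections), and a choice of external locations, which take part in no
connection. -/
structure GSystem (A : Set Gadget) : Type 1 where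
  ι : Type
  pick : ι → Gadget
  mem : ∀ i, pick i ∈ A
  Ext : Type
  conn : (Σ i, (pick i).Loc) → (Σ i, (pick i).Loc) → Prop
  conn_symm : ∀ a b, conn a b → conn b a
  conn_unique : ∀ a b c, conn a b → conn a c → b = c
  extLoc : Ext → Σ i, (pick i).Loc
  ext_inj : Function.Injective extLoc
  ext_free : ∀ x b, ¬ conn (extLoc x) b

/-- Global states of a system. -/
def GSystem.GState {A : Set Gadget} (S : GSystem A) : Type := ∀ i, (S.pick i).St

/-- The initial global state. -/
def GSystem.initState {A : Set Gadget} (S : GSystem A) : S.GState :=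
  fun i => (S.pick i).init

/-- One move of the robot in a system: along a connection (state unchanged), or a
traversal of a single gadget (changing only that gadget's state). -/
def GSystem.step {A : Set Gadget} (S : GSystem A) :
    (S.GState × Σ i, (S.pick i).Loc) → (S.GState × Σ i, (S.pick i).Loc) → Prop :=
  fun c c' =>
    (S.conn c.2 c'.2 ∧ c'.1 = c.1) ∨
    (∃ (i : S.ι) (a b : (S.pick i).Loc),
      c.2 = ⟨i, a⟩ ∧ c'.2 = ⟨i, b⟩ ∧
      (S.pick i).tr (c.1 i, a) (c'.1 i, b) ∧ ∀ j, j ≠ i → c'.1 j = c.1 j)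

/-- Reachability in a system. -/
def GSystem.Reach {A : Set Gadget} (S : GSystem A) :=
  Relation.ReflTransGen S.step

/-- Reachability within a single gadget. -/
def Gadget.Reach (g : Gadget) := Relation.ReflTransGen g.tr

/-- The system `S` is equivalent to the gadget `g`: there is a bijection between the
external locations of `S` and the locations of `g`, and a correspondence of states
containing the initial states, under which the external transition behaviors match in
both directions. -/
def GEquivalent {A : Set Gadget} (S : GSystem A) (g : Gadget) : Prop :=
  ∃ (f : S.Ext ≃ g.Loc) (R : S.GState → g.St → Prop),
    R S.initState g.init ∧
    (∀ σ s, R σ s → ∀ (x y : S.Ext) σ',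
      S.Reach (σ, S.extLoc x) (σ', S.extLoc y) →
      ∃ s', R σ' s' ∧ g.Reach (s, f x) (s', f y)) ∧
    (∀ σ s, R σ s → ∀ (x y : S.Ext) s',
      g.Reach (s, f x) (s', f y) →
      ∃ σ', R σ' s' ∧ S.Reach (σ, S.extLoc x) (σ', S.extLoc y))

/-- The gadget set `A` simulates the gadget `g`: some system over `A` together with the
branching hallway is equivalent to `g`. -/
def Simulates (A : Set Gadget) (g : Gadget) : Prop :=
  ∃ S : GSystem (A ∪ {Gadget.hallway}), GEquivalent S g


/-! Substitute into a system `S` over `B` equivalent to `h`, for every gadget `S.pick i`, a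
system `T i` over `A ∪ {hallway}` equivalent to it (a hallway of `S` is kept as a one-gadget
system). A state of the composite is a family of block states, related to a state of `S` blockwise
through the equivalences of the `T i`. A run of `S` lifts to the composite one traversal at a time,
by the backward simulations of the blocks. Conversely, cut a run of the composite where it crosses a
connection of `S`: each piece stays inside one block and, by the forward simulation of that block,
projects to a run of the corresponding gadget of `S`. -/

open Function Classical

namespace GSystem

theorem reach_update {A : Set Gadget} (S : GSystem A) {i : S.ι} {σ : ∀ i, (S.pick i).St}
    {a : (S.pick i).Loc} {s' : (S.pick i).St} {b : (S.pick i).Loc}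
    (h : (S.pick i).Reach (σ i, a) (s', b)) :
    S.Reach (σ, ⟨i, a⟩) (update σ i s', ⟨i, b⟩) := by
  have hstep : ∀ p p' : (S.pick i).St × (S.pick i).Loc, (S.pick i).tr p p' →
      S.step (update σ i p.1, ⟨i, p.2⟩) (update σ i p'.1, ⟨i, p'.2⟩) := by
    intro p p' hp
    refine Or.inr ⟨i, p.2, p'.2, rfl, rfl, ?_,
      fun j hj => (update_of_ne hj _ _).trans (update_of_ne hj _ _).symm⟩
    show (S.pick i).tr (update σ i p.1 i, p.2) (update σ i p'.1 i, p'.2)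
    rwa [update_self, update_self]
  have h' : S.Reach (update σ i (σ i), ⟨i, a⟩) (update σ i s', ⟨i, b⟩) := h.lift _ hstep
  rwa [update_eq_self] at h'

section Single

variable {D : Set Gadget} {g : Gadget}

def single (hg : g ∈ D) : GSystem D where
  ι := PUnit
  pick _ := g
  mem _ := hg
  Ext := g.Loc
  conn _ _ := False
  conn_symm _ _ := id
  conn_unique _ _ _ h := h.elim
  extLoc a := ⟨PUnit.unit, a⟩
  ext_inj _ _ h := eq_of_heq (Sigma.mk.inj h).2
  ext_free _ _ := id

theorem single_equivalent (hg : g ∈ D) : GEquivalent (single hg) g := by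
  refine ⟨Equiv.refl g.Loc, fun σ s => σ PUnit.unit = s, rfl, ?_, ?_⟩
  · rintro σ s rfl x y σ' hr
    have hstep : ∀ c c', (single hg).step c c' →
        g.tr (c.1 PUnit.unit, c.2.2) (c'.1 PUnit.unit, c'.2.2) := by
      rintro ⟨τ, ⟨⟨⟩, a⟩⟩ ⟨τ', ⟨⟨⟩, b⟩⟩ (⟨⟨⟩, -⟩ | ⟨⟨⟩, a, b, ⟨⟩, ⟨⟩, htr, -⟩)
      exact htr
    exact ⟨σ' PUnit.unit, rfl, hr.lift _ hstep⟩
  · rintro σ s rfl x y s' hr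
    exact ⟨_, update_self _ _ σ, (single hg).reach_update hr⟩

end Single

section Subst

variable {C D : Set Gadget} (S : GSystem C) (T : S.ι → GSystem D)
  (fT : ∀ i, (T i).Ext ≃ (S.pick i).Loc)

def substLoc (i : S.ι) (l : Σ j, ((T i).pick j).Loc) :
    Σ p : Σ i, (T i).ι, ((T p.1).pick p.2).Loc :=
  ⟨⟨i, l.1⟩, l.2⟩

def outerLoc (q : Σ i, (S.pick i).Loc) : Σ p : Σ i, (T i).ι, ((T p.1).pick p.2).Loc :=
  substLoc S T q.1 ((T q.1).extLoc ((fT q.1).symm q.2))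

variable {S T fT}

theorem substLoc_inj {i i' : S.ι} {l : Σ j, ((T i).pick j).Loc}
    {l' : Σ j, ((T i').pick j).Loc} :
    substLoc S T i l = substLoc S T i' l' ↔ i = i' ∧ HEq l l' := by
  constructor
  · obtain ⟨j, u⟩ := l
    obtain ⟨j', u'⟩ := l'
    simp only [substLoc, Sigma.mk.inj_iff]
    rintro ⟨⟨rfl, rfl⟩, ⟨⟩⟩
    exact ⟨rfl, .rfl⟩
  · rintro ⟨rfl, ⟨⟩⟩
    rfl

theorem outerLoc_injective : Injective (outerLoc S T fT) := by
  rintro ⟨i, a⟩ ⟨i', a'⟩ h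
  obtain ⟨rfl, h⟩ := substLoc_inj.1 h
  dsimp only at h ⊢
  rw [(fT i).symm.injective ((T i).ext_inj (eq_of_heq h))]

theorem not_conn_of_substLoc_eq_outerLoc {i : S.ι} {a b : Σ j, ((T i).pick j).Loc}
    {q : Σ i, (S.pick i).Loc} (h : substLoc S T i a = outerLoc S T fT q) :
    ¬ (T i).conn a b := by
  obtain ⟨rfl, ⟨⟩⟩ := substLoc_inj.1 h
  exact (T _).ext_free _ b

/-- Substitute the system `T i` for the gadget `S.pick i`, with `fT i` matching the external
locations of `T i` to the locations of `S.pick i`; the connections of `S` join the corresponding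
external locations of the blocks. -/
def subst (S : GSystem C) (T : S.ι → GSystem D) (fT : ∀ i, (T i).Ext ≃ (S.pick i).Loc) :
    GSystem D where
  ι := Σ i, (T i).ι
  pick p := (T p.1).pick p.2
  mem p := (T p.1).mem p.2
  Ext := S.Ext
  conn l l' :=
    (∃ i a b, (T i).conn a b ∧ l = substLoc S T i a ∧ l' = substLoc S T i b) ∨
    (∃ q q', S.conn q q' ∧ l = outerLoc S T fT q ∧ l' = outerLoc S T fT q')
  conn_symm := by
    rintro l l' (⟨i, a, b, hc, rfl, rfl⟩ | ⟨q, q', hc, rfl, rfl⟩)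
    · exact Or.inl ⟨i, b, a, (T i).conn_symm _ _ hc, rfl, rfl⟩
    · exact Or.inr ⟨q', q, S.conn_symm _ _ hc, rfl, rfl⟩
  conn_unique := by
    rintro l l₁ l₂ (⟨i, a, b, hc, rfl, rfl⟩ | ⟨q, q₁, hc, rfl, rfl⟩)
      (⟨i', a', b', hc', hl, rfl⟩ | ⟨q', q₂, hc', hl, rfl⟩)
    · obtain ⟨rfl, ⟨⟩⟩ := substLoc_inj.1 hl
      rw [(T i).conn_unique _ _ _ hc hc']
    · exact absurd hc (not_conn_of_substLoc_eq_outerLoc hl)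
    · exact absurd hc' (not_conn_of_substLoc_eq_outerLoc hl.symm)
    · rw [S.conn_unique _ _ _ hc (outerLoc_injective hl ▸ hc')]
  extLoc x := outerLoc S T fT (S.extLoc x)
  ext_inj _ _ h := S.ext_inj (outerLoc_injective h)
  ext_free := by
    rintro x l (⟨i, a, b, hc, hl, -⟩ | ⟨q, q', hc, hl, -⟩)
    · exact not_conn_of_substLoc_eq_outerLoc hl.symm hc
    · exact S.ext_free x q' (outerLoc_injective hl ▸ hc)

def blocks (σ : (S.subst T fT).GState) (i : S.ι) : (T i).GState :=
  fun j => σ ⟨i, j⟩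

noncomputable def setBlock (σ : (S.subst T fT).GState) (i : S.ι) (ρ : (T i).GState) :
    (S.subst T fT).GState :=
  fun p => update (blocks σ) i ρ p.1 p.2

theorem blocks_setBlock (σ : (S.subst T fT).GState) (i : S.ι) (ρ : (T i).GState) :
    blocks (setBlock σ i ρ) = update (blocks σ) i ρ :=
  rfl

theorem setBlock_blocks (σ : (S.subst T fT).GState) (i : S.ι) :
    setBlock σ i (blocks σ i) = σ := by
  funext ⟨k, j⟩
  simp [setBlock, blocks]

theorem subst_step_inner {i : S.ι} {c c' : (T i).GState × Σ j, ((T i).pick j).Loc}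
    (h : (T i).step c c') (σ : (S.subst T fT).GState) :
    (S.subst T fT).step (setBlock σ i c.1, substLoc S T i c.2)
      (setBlock σ i c'.1, substLoc S T i c'.2) := by
  rcases h with ⟨hc, he⟩ | ⟨j, a, b, ha, hb, htr, hoth⟩
  · exact Or.inl ⟨Or.inl ⟨i, _, _, hc, rfl, rfl⟩, by rw [he]⟩
  · refine Or.inr ⟨⟨i, j⟩, a, b, by rw [ha]; rfl, by rw [hb]; rfl, ?_, ?_⟩
    · show ((T i).pick j).tr (setBlock σ i c.1 ⟨i, j⟩, a) (setBlock σ i c'.1 ⟨i, j⟩, b)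
      simpa [setBlock] using htr
    · rintro ⟨k, j'⟩ hne
      show update (blocks σ) i c'.1 k j' = update (blocks σ) i c.1 k j'
      by_cases hk : k = i
      · subst hk
        rw [update_self, update_self]
        exact hoth j' fun h => hne (h ▸ rfl)
      · rw [update_of_ne hk, update_of_ne hk]

theorem subst_reach_inner {σ : (S.subst T fT).GState} {i : S.ι}
    {l : Σ j, ((T i).pick j).Loc} {ρ' : (T i).GState} {l' : Σ j, ((T i).pick j).Loc}
    (h : (T i).Reach (blocks σ i, l) (ρ', l')) :
    (S.subst T fT).Reach (σ, substLoc S T i l) (setBlock σ i ρ', substLoc S T i l') := by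
  have h' : (S.subst T fT).Reach (setBlock σ i (blocks σ i), substLoc S T i l)
      (setBlock σ i ρ', substLoc S T i l') :=
    h.lift (fun c : (T i).GState × Σ j, ((T i).pick j).Loc =>
      (setBlock σ i c.1, substLoc S T i c.2)) fun _ _ hc => subst_step_inner hc σ
  rwa [setBlock_blocks] at h'

theorem subst_step_outer {q q' : Σ i, (S.pick i).Loc} (h : S.conn q q')
    (σ : (S.subst T fT).GState) :
    (S.subst T fT).step (σ, outerLoc S T fT q) (σ, outerLoc S T fT q') :=
  Or.inl ⟨Or.inr ⟨q, q', h, rfl, rfl⟩, rfl⟩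

theorem subst_step_cases {σ : (S.subst T fT).GState} {i : S.ι} {l : Σ j, ((T i).pick j).Loc}
    {c' : (S.subst T fT).GState × Σ p : Σ i, (T i).ι, ((T p.1).pick p.2).Loc}
    (h : (S.subst T fT).step (σ, substLoc S T i l) c') :
    (∃ l', c'.2 = substLoc S T i l' ∧ (T i).step (blocks σ i, l) (blocks c'.1 i, l') ∧
        ∀ k ≠ i, blocks c'.1 k = blocks σ k) ∨
    (c'.1 = σ ∧ ∃ a q', l = (T i).extLoc ((fT i).symm a) ∧ S.conn ⟨i, a⟩ q' ∧
        c'.2 = outerLoc S T fT q') := by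
  obtain ⟨τ, l'⟩ := c'
  rcases h with ⟨⟨i₀, a, b, hc, hl, hl'⟩ | ⟨⟨i₀, a⟩, q', hc, hl, hl'⟩, hτ⟩ |
    ⟨⟨i₀, j⟩, a, b, hl, hl', htr, hoth⟩
  · obtain ⟨rfl, ⟨⟩⟩ := substLoc_inj.1 hl
    exact Or.inl ⟨b, hl', Or.inl ⟨hc, congrArg (blocks · i) hτ⟩,
      fun k _ => congrArg (blocks · k) hτ⟩
  · obtain ⟨rfl, ⟨⟩⟩ := substLoc_inj.1 hl
    exact Or.inr ⟨hτ, a, q', rfl, hc, hl'⟩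
  · obtain ⟨rfl, ⟨⟩⟩ := substLoc_inj.1 (show substLoc S T i l = substLoc S T i₀ ⟨j, a⟩ from hl)
    refine Or.inl ⟨⟨j, b⟩, hl', Or.inr ⟨j, a, b, rfl, rfl, htr, fun j' hj' => hoth ⟨i, j'⟩ ?_⟩,
      fun k hk => funext fun j' => hoth ⟨k, j'⟩ ?_⟩
    · show (⟨i, j'⟩ : Σ i, (T i).ι) ≠ ⟨i, j⟩
      simpa using hj'
    · show (⟨k, j'⟩ : Σ i, (T i).ι) ≠ ⟨i, j⟩
      simp [hk]

end Subst

section Simulation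

variable {C D : Set Gadget} {S : GSystem C} {T : S.ι → GSystem D}
  {fT : ∀ i, (T i).Ext ≃ (S.pick i).Loc} (R : ∀ i, (T i).GState → (S.pick i).St → Prop)

def BlockRel (τ : (S.subst T fT).GState) (σ : S.GState) : Prop :=
  ∀ k, R k (blocks τ k) (σ k)

/-- The invariant of a run of `S.subst T fT` started at `outerLoc S T fT q₀`: the current block
`i` was entered through the location `a` of `S.pick i`, at a configuration of `S` reachable from
`(σ₀, q₀)` that matches the current state on all other blocks, and block `i` has since run from a
state `ρ` matching `σ i`. -/
def EnteredBlock (σ₀ : S.GState) (q₀ : Σ i, (S.pick i).Loc) (τ : (S.subst T fT).GState)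
    (i : S.ι) (l : Σ j, ((T i).pick j).Loc) : Prop :=
  ∃ σ a ρ, S.Reach (σ₀, q₀) (σ, ⟨i, a⟩) ∧ (∀ k ≠ i, R k (blocks τ k) (σ k)) ∧ R i ρ (σ i) ∧
    (T i).Reach (ρ, (T i).extLoc ((fT i).symm a)) (blocks τ i, l)

variable {R}

theorem enteredBlock_of_reach {σ₀ σ : S.GState} {q₀ : Σ i, (S.pick i).Loc}
    {τ : (S.subst T fT).GState} {i : S.ι} {a : (S.pick i).Loc}
    (h : S.Reach (σ₀, q₀) (σ, ⟨i, a⟩)) (hR : BlockRel R τ σ) :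
    EnteredBlock R σ₀ q₀ τ i ((T i).extLoc ((fT i).symm a)) :=
  ⟨σ, a, blocks τ i, h, fun k _ => hR k, hR i, .refl⟩

theorem EnteredBlock.exit
    (hfwd : ∀ i ρ s, R i ρ s → ∀ x y ρ', (T i).Reach (ρ, (T i).extLoc x) (ρ', (T i).extLoc y) →
      ∃ s', R i ρ' s' ∧ (S.pick i).Reach (s, fT i x) (s', fT i y))
    {σ₀ : S.GState} {q₀ : Σ i, (S.pick i).Loc} {τ : (S.subst T fT).GState} {i : S.ι}
    {a : (S.pick i).Loc} (h : EnteredBlock R σ₀ q₀ τ i ((T i).extLoc ((fT i).symm a))) :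
    ∃ σ, S.Reach (σ₀, q₀) (σ, ⟨i, a⟩) ∧ BlockRel R τ σ := by
  obtain ⟨σ, a₀, ρ, hS, hR, hρ, hT⟩ := h
  obtain ⟨s, hs, hg⟩ := hfwd i ρ (σ i) hρ _ _ _ hT
  rw [Equiv.apply_symm_apply, Equiv.apply_symm_apply] at hg
  exact ⟨update σ i s, hS.trans (S.reach_update hg),
    (forall_update_iff σ fun k t => R k (blocks τ k) t).2 ⟨hs, hR⟩⟩

theorem enteredBlock_of_reach_subst
    (hfwd : ∀ i ρ s, R i ρ s → ∀ x y ρ', (T i).Reach (ρ, (T i).extLoc x) (ρ', (T i).extLoc y) →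
      ∃ s', R i ρ' s' ∧ (S.pick i).Reach (s, fT i x) (s', fT i y))
    {σ₀ : S.GState} {q₀ : Σ i, (S.pick i).Loc} {τ₀ : (S.subst T fT).GState}
    (hR₀ : BlockRel R τ₀ σ₀) {τ : (S.subst T fT).GState} {i : S.ι}
    {l : Σ j, ((T i).pick j).Loc}
    (h : (S.subst T fT).Reach (τ₀, outerLoc S T fT q₀) (τ, substLoc S T i l)) :
    EnteredBlock R σ₀ q₀ τ i l := by
  suffices ∀ c, (S.subst T fT).Reach (τ₀, outerLoc S T fT q₀) c →
      EnteredBlock R σ₀ q₀ c.1 c.2.1.1 ⟨c.2.1.2, c.2.2⟩ from this _ h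
  intro c hc
  induction hc with
  | refl => exact enteredBlock_of_reach .refl hR₀
  | @tail c c' _ hstep ih =>
    obtain ⟨τ, ⟨⟨i, j⟩, u⟩⟩ := c
    obtain ⟨τ', l'⟩ := c'
    rcases subst_step_cases (l := ⟨j, u⟩) hstep with
      ⟨l', rfl, hT, hR⟩ | ⟨rfl, a, q', hl, hc, rfl⟩
    · obtain ⟨σ, a, ρ, hS, hRk, hρ, hTr⟩ := ih
      exact ⟨σ, a, ρ, hS, fun k hk => hR k hk ▸ hRk k hk, hρ, hTr.tail hT⟩
    · have hin : EnteredBlock R σ₀ q₀ τ' i ((T i).extLoc ((fT i).symm a)) := hl ▸ ih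
      obtain ⟨σ, hS, hR⟩ := hin.exit hfwd
      exact enteredBlock_of_reach (hS.tail (Or.inl ⟨hc, rfl⟩)) hR

theorem reach_subst_of_reach
    (hbwd : ∀ i ρ s, R i ρ s → ∀ x y s', (S.pick i).Reach (s, fT i x) (s', fT i y) →
      ∃ ρ', R i ρ' s' ∧ (T i).Reach (ρ, (T i).extLoc x) (ρ', (T i).extLoc y))
    {c c' : S.GState × Σ i, (S.pick i).Loc} (h : S.Reach c c') {τ : (S.subst T fT).GState}
    (hR : BlockRel R τ c.1) :
    ∃ τ', BlockRel R τ' c'.1 ∧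
      (S.subst T fT).Reach (τ, outerLoc S T fT c.2) (τ', outerLoc S T fT c'.2) := by
  induction h with
  | refl => exact ⟨τ, hR, .refl⟩
  | @tail c₁ c₂ _ hstep ih =>
    obtain ⟨τ₁, hR₁, hreach⟩ := ih
    rcases hstep with ⟨hc, he⟩ | ⟨i, a, b, ha, hb, htr, hoth⟩
    · exact ⟨τ₁, he ▸ hR₁, hreach.tail (subst_step_outer hc τ₁)⟩
    · have hg : (S.pick i).Reach (c₁.1 i, fT i ((fT i).symm a))
          (c₂.1 i, fT i ((fT i).symm b)) := by
        rw [Equiv.apply_symm_apply, Equiv.apply_symm_apply]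
        exact .single htr
      obtain ⟨ρ, hρ, hT⟩ := hbwd i _ _ (hR₁ i) _ _ _ hg
      refine ⟨setBlock τ₁ i ρ, fun k => ?_, ?_⟩
      · rw [blocks_setBlock]
        by_cases hk : k = i
        · subst hk
          rw [update_self]
          exact hρ
        · rw [update_of_ne hk, hoth k hk]
          exact hR₁ k
      · rw [ha] at hreach
        rw [hb]
        exact hreach.trans (subst_reach_inner hT)

end Simulation

end GSystem

open GSystem in
theorem GEquivalent.exists_subst {C D : Set Gadget} {S : GSystem C} {h : Gadget}
    (hS : GEquivalent S h) (hT : ∀ i, ∃ T : GSystem D, GEquivalent T (S.pick i)) :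
    ∃ S' : GSystem D, GEquivalent S' h := by
  obtain ⟨f, R, hinit, hfwd, hbwd⟩ := hS
  choose T fT RT hTinit hTfwd hTbwd using hT
  refine ⟨S.subst T fT, f, fun τ s => ∃ σ, R σ s ∧ BlockRel RT τ σ,
    ⟨S.initState, hinit, hTinit⟩, ?_, ?_⟩
  · rintro τ s ⟨σ, hσ, hRT⟩ x y τ' hreach
    obtain ⟨σ', hS', hRT'⟩ := (enteredBlock_of_reach_subst hTfwd hRT hreach).exit hTfwd
    obtain ⟨s', hs', hh⟩ := hfwd σ s hσ x y σ' hS'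
    exact ⟨s', ⟨σ', hs', hRT'⟩, hh⟩
  · rintro τ s ⟨σ, hσ, hRT⟩ x y s' hr
    obtain ⟨σ', hσ', hS'⟩ := hbwd σ s hσ x y s' hr
    obtain ⟨τ', hRT', hreach⟩ := reach_subst_of_reach hTbwd hS' hRT
    exact ⟨τ', ⟨σ', hσ', hRT'⟩, hreach⟩

theorem simulation_transitive_general (A B : Set Gadget) (h : Gadget)
    (hBh : Simulates B h)
    (hAB : ∀ g' ∈ B, Simulates A g') :
    Simulates A h := by
  obtain ⟨S, hS⟩ := hBh
  refine hS.exists_subst fun i => ?_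
  rcases S.mem i with hB | hH
  · exact hAB _ hB
  · exact ⟨.single (Or.inr hH), GSystem.single_equivalent _⟩

/-- if gadget set `A` simulates gadget `g`, and gadget set `B` containing
`g` (each of whose gadgets `A` simulates) simulates gadget `h`, then `A` together with
the branching hallway simulates `h`.  In particular, simulation of gadgets is
transitive. -/
theorem simulation_transitive (A B : Set Gadget) (g h : Gadget)
    (hAg : Simulates A g) (hgB : g ∈ B) (hBh : Simulates B h)
    (hAB : ∀ g' ∈ B, Simulates A g') :
    Simulates A h :=
  simulation_transitive_general A B h hBh hAB
end

section
/- In any traversal of the NTL-simulating construction (entering and exiting at external locations), each of the three distinguished cuts—the pair of upper pathways of the outer toggles, the pair of horizontal pathways of the middle toggles, and the pair of upper pathways of the bottom toggles—is crossed an even number of times, and therefore each pair of toggles in the construction ends in a configuration where both members have been flipped an equal parity number of times (both in or both out, both left or both right). -/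
/-!
Each crossing of a cut flips the inside/outside status of the walker with respect to that
region, and a walk starting and ending outside changes that status an even number of times.
For the toggles, the boolean `g ^^ h ^^ (inside region)` is invariant along the walk, since
each step flips `g ^^ h` exactly when it crosses the cut; as the walk starts and ends
outside, `g ^^ h` has the same value at both ends, i.e. the two toggles were flipped
with equal parity.
-/

lemma apply_eq_apply_zero_of_forall_lt_succ {α : Type*} (u : ℕ → α) (m : ℕ)
    (hu : ∀ j < m, u (j + 1) = u j) : u m = u 0 := by
  induction m with
  | zero => rfl
  | succ m ih =>
    rw [hu m m.lt_succ_self, ih fun j hj => hu j (hj.trans m.lt_succ_self)]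

lemma even_card_filter_ne_succ_iff (b : ℕ → Bool) (m : ℕ) :
    Even ((Finset.range m).filter fun j => b j ≠ b (j + 1)).card ↔ b m = b 0 := by
  induction m with
  | zero => simp
  | succ m ih =>
    rw [Finset.range_add_one, Finset.filter_insert]
    by_cases hstep : b m = b (m + 1)
    · rw [if_neg (not_not.mpr hstep), ih, hstep]
    · rw [if_pos hstep, Finset.card_insert_of_notMem (by simp), Nat.even_add_one, ih]
      revert hstep
      cases b 0 <;> cases b m <;> cases b (m + 1) <;> decide

lemma xor_xor_eq_of_forall_lt_bne (g h a : ℕ → Bool) (m : ℕ)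
    (hflip : ∀ j < m, xor (g j != g (j + 1)) (h j != h (j + 1)) = (a j != a (j + 1))) :
    xor (xor (g m) (h m)) (a m) = xor (xor (g 0) (h 0)) (a 0) :=
  apply_eq_apply_zero_of_forall_lt_succ (fun j => xor (xor (g j) (h j)) (a j)) m fun j hj => by
    have := hflip j hj
    revert this
    cases g j <;> cases g (j + 1) <;> cases h j <;> cases h (j + 1) <;>
      cases a j <;> cases a (j + 1) <;> decide

theorem ntl_cut_parity_general {Pos : Type*} (m : ℕ) (f : ℕ → Pos)
    (A : Fin 3 → Pos → Bool) (g h : Fin 3 → ℕ → Bool)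
    (hstart : ∀ i, A i (f 0) = false) (hend : ∀ i, A i (f m) = false)
    (hflip : ∀ i, ∀ j < m,
      (xor (g i j != g i (j + 1)) (h i j != h i (j + 1))) =
        (A i (f j) != A i (f (j + 1)))) :
    ∀ i : Fin 3,
      Even (((Finset.range m).filter fun j => A i (f j) ≠ A i (f (j + 1))).card) ∧
      ((g i m = g i 0) ↔ (h i m = h i 0)) := by
  intro i
  refine ⟨(even_card_filter_ne_succ_iff (fun j => A i (f j)) m).mpr
    (by rw [hstart i, hend i]), ?_⟩
  have hinv := xor_xor_eq_of_forall_lt_bne (g i) (h i) (fun j => A i (f j)) m (hflip i)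
  simp only [hstart i, hend i, Bool.xor_false] at hinv
  revert hinv
  cases g i m <;> cases g i 0 <;> cases h i m <;> cases h i 0 <;> decide

/-- cut parities in the NTL-simulating construction.  A traversal is a
walk `f 0, f 1, …, f m` through the construction, beginning and ending at external
locations, which lie outside each of the three distinguished planar regions
(`A i p = true` means position `p` is inside region `i`).  The two members of toggle
pair `i` have orientations `g i`, `h i` (as functions of time), and each crossing of
cut `i` flips exactly one member of pair `i`, while steps that do not cross cut `i`
flip neither.  Then each cut is crossed an even number of times, and each toggle pair
ends with both members flipped an equal parity number of times (so paired toggles stay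
synchronized). -/
theorem ntl_cut_parity {Pos : Type*} (m : ℕ) (f : ℕ → Pos)
    (A : Fin 3 → Pos → Bool) (g h : Fin 3 → ℕ → Bool)
    (hstart : ∀ i, A i (f 0) = false) (hend : ∀ i, A i (f m) = false)
    (hflip : ∀ i, ∀ j < m,
      (xor (g i j != g i (j + 1)) (h i j != h i (j + 1))) =
        (A i (f j) != A i (f (j + 1))))
    (hstable : ∀ i, ∀ j < m, A i (f j) = A i (f (j + 1)) →
      g i j = g i (j + 1) ∧ h i j = h i (j + 1)) :
    ∀ i : Fin 3,
      Even (((Finset.range m).filter fun j => A i (f j) ≠ A i (f (j + 1))).card) ∧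
      ((g i m = g i 0) ↔ (h i m = h i 0)) :=
  ntl_cut_parity_general m f A g h hstart hend hflip
end

section
/- In the NWT-to-AP2T construction, where two noncrossing wire-toggle gadgets are connected by identifying a tripwire location of one with a tripwire location of the other (so that any traversal of either toggle tunnel necessarily crosses both tripwires... specifically each toggle traversal also crosses the other gadget's tripwire), the two gadgets' states remain synchronized under all reachable transitions, and the composed system's external behavior equals that of an antiparallel 2-toggle. -/
/-- Locations of the construction of an antiparallel 2-toggle from two noncrossing
wire-toggles (NWTs).  `TL, TR, BL, BR` are external; `M` joins the toggle tunnel of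
gadget 1 with the tripwire of gadget 2 (top tunnel), `N` joins the toggle tunnel of
gadget 2 with the tripwire of gadget 1 (bottom tunnel). -/
inductive AP2TLoc : Type
  | TL | TR | BL | BR | M | N

/-- The state is the pair of NWT states `(a, b)`.  Top tunnel:
`TR —(tripwire of gadget 2, flips b)— M —(toggle of gadget 1: M→TL when a = false,
TL→M when a = true, flips a)— TL`.  Bottom tunnel: `BL —(toggle of gadget 2: BL→N when
b = false, N→BL when b = true, flips b)— N —(tripwire of gadget 1, flips a)— BR`.
Thus any traversal of either toggle tunnel also crosses the other gadget's tripwire. -/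
def NWTStep : (Bool × Bool) × AP2TLoc → (Bool × Bool) × AP2TLoc → Prop := fun c c' =>
  (c.1.1 = false ∧ c.2 = .M ∧ c'.2 = .TL ∧ c'.1 = (true, c.1.2)) ∨
  (c.1.1 = true ∧ c.2 = .TL ∧ c'.2 = .M ∧ c'.1 = (false, c.1.2)) ∨
  (((c.2 = .M ∧ c'.2 = .TR) ∨ (c.2 = .TR ∧ c'.2 = .M)) ∧ c'.1 = (c.1.1, !c.1.2)) ∨
  (c.1.2 = false ∧ c.2 = .BL ∧ c'.2 = .N ∧ c'.1 = (c.1.1, true)) ∨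
  (c.1.2 = true ∧ c.2 = .N ∧ c'.2 = .BL ∧ c'.1 = (c.1.1, false)) ∨
  (((c.2 = .N ∧ c'.2 = .BR) ∨ (c.2 = .BR ∧ c'.2 = .N)) ∧ c'.1 = (!c.1.1, c.1.2))

/-- The transition relation of an antiparallel 2-toggle in state `b`: in state `false`
the traversals `TR→TL` (top) and `BL→BR` (bottom) are possible; in state `true` their
reverses. -/
def AP2TTarget (b : Bool) (x y : AP2TLoc) : Prop :=
  (b = false ∧ ((x = .TR ∧ y = .TL) ∨ (x = .BL ∧ y = .BR))) ∨
  (b = true ∧ ((x = .TL ∧ y = .TR) ∨ (x = .BR ∧ y = .BL)))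

/-!
Three quantities are conserved by every step. The agent never leaves its tunnel. Each step
flips exactly one gadget state and enters or leaves an internal location, so `a xor b` records
whether the agent is inside a tunnel, and the states agree at external locations. Call the toggle
of the agent's tunnel closed when it cannot be crossed from the agent's side: crossing it flips
both the side and the toggle's state, and the tripwire in that tunnel belongs to the other gadget,
so closedness is conserved, and while the toggle is closed the agent stays on its side. Hence the
only external moves are staying put and crossing an open toggle once, i.e. the AP2T moves.
-/

theorem Relation.ReflTransGen.apply_eq_of_step {α β : Type*} {r : α → α → Prop} {a b : α}
    (f : α → β) (hf : ∀ ⦃a b⦄, r a b → f b = f a) (h : Relation.ReflTransGen r a b) :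
    f b = f a := by
  induction h with
  | refl => rfl
  | tail _ hstep ih => exact (hf hstep).trans ih

abbrev NWTConfig := (Bool × Bool) × AP2TLoc

@[elab_as_elim]
theorem NWTStep.casesOn {motive : NWTConfig → NWTConfig → Prop} {c c' : NWTConfig}
    (h : NWTStep c c')
    (toggle₁ : ∀ b, motive ((false, b), .M) ((true, b), .TL))
    (toggle₁_rev : ∀ b, motive ((true, b), .TL) ((false, b), .M))
    (tripwire₂ : ∀ a b, motive ((a, b), .M) ((a, !b), .TR))
    (tripwire₂_rev : ∀ a b, motive ((a, b), .TR) ((a, !b), .M))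
    (toggle₂ : ∀ a, motive ((a, false), .BL) ((a, true), .N))
    (toggle₂_rev : ∀ a, motive ((a, true), .N) ((a, false), .BL))
    (tripwire₁ : ∀ a b, motive ((a, b), .N) ((!a, b), .BR))
    (tripwire₁_rev : ∀ a b, motive ((a, b), .BR) ((!a, b), .N)) :
    motive c c' := by
  obtain ⟨⟨a, b⟩, l⟩ := c
  obtain ⟨σ, l'⟩ := c'
  simp only [NWTStep] at h
  rcases h with ⟨rfl, rfl, rfl, rfl⟩ | ⟨rfl, rfl, rfl, rfl⟩ |
    ⟨⟨rfl, rfl⟩ | ⟨rfl, rfl⟩, rfl⟩ | ⟨rfl, rfl, rfl, rfl⟩ | ⟨rfl, rfl, rfl, rfl⟩ |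
    ⟨⟨rfl, rfl⟩ | ⟨rfl, rfl⟩, rfl⟩
  exacts [toggle₁ b, toggle₁_rev b, tripwire₂ a b, tripwire₂_rev a b, toggle₂ a, toggle₂_rev a,
    tripwire₁ a b, tripwire₁_rev a b]

namespace AP2TLoc

def isTop : AP2TLoc → Bool
  | TR | M | TL => true
  | BL | N | BR => false

def isInternal : AP2TLoc → Bool
  | M | N => true
  | TL | TR | BL | BR => false

/-- The side of the tunnel's toggle that is reached by crossing it in state `false`, so the
toggle can be crossed from the agent's side iff this equals the toggle's state. -/
def pastToggle : AP2TLoc → Bool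
  | TL | N | BR => true
  | TR | M | BL => false

theorem isInternal_eq_false {x : AP2TLoc} (hx : x ≠ M ∧ x ≠ N) : x.isInternal = false := by
  cases x <;> simp_all [isInternal]

theorem eq_of_isTop_eq_of_pastToggle_eq {x y : AP2TLoc} (hx : x ≠ M ∧ x ≠ N)
    (hy : y ≠ M ∧ y ≠ N) (htop : y.isTop = x.isTop) (hpast : y.pastToggle = x.pastToggle) :
    y = x := by
  cases x <;> cases y <;> simp_all [isTop, pastToggle]

theorem ap2tTarget_of_pastToggle {b : Bool} {x y : AP2TLoc} (hx : x ≠ M ∧ x ≠ N)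
    (hy : y ≠ M ∧ y ≠ N) (htop : y.isTop = x.isTop) (hx_past : x.pastToggle = b)
    (hy_past : y.pastToggle = !b) : AP2TTarget b x y := by
  cases x <;> cases y <;> subst hx_past <;> simp_all [isTop, pastToggle, AP2TTarget]

end AP2TLoc

def toggleState (c : NWTConfig) : Bool :=
  if c.2.isTop then c.1.1 else c.1.2

def toggleClosed (c : NWTConfig) : Bool :=
  c.2.pastToggle ^^ toggleState c

namespace NWTStep

variable {c c' : NWTConfig}

theorem isTop_eq (h : NWTStep c c') : c'.2.isTop = c.2.isTop := by
  refine h.casesOn ?_ ?_ ?_ ?_ ?_ ?_ ?_ ?_ <;> decide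

theorem xor_isInternal_eq (h : NWTStep c c') :
    (c'.1.1 ^^ c'.1.2 ^^ c'.2.isInternal) = (c.1.1 ^^ c.1.2 ^^ c.2.isInternal) := by
  refine h.casesOn ?_ ?_ ?_ ?_ ?_ ?_ ?_ ?_ <;> decide

theorem toggleClosed_eq (h : NWTStep c c') : toggleClosed c' = toggleClosed c := by
  refine h.casesOn ?_ ?_ ?_ ?_ ?_ ?_ ?_ ?_ <;> decide

theorem pastToggle_eq_of_toggleClosed (h : NWTStep c c') (hc : toggleClosed c = true) :
    c'.2.pastToggle = c.2.pastToggle := by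
  revert hc
  refine h.casesOn ?_ ?_ ?_ ?_ ?_ ?_ ?_ ?_ <;> decide

end NWTStep

open Relation

theorem toggleState_diag (p : Bool) (l : AP2TLoc) : toggleState ((p, p), l) = p := by
  unfold toggleState; split <;> rfl

theorem pastToggle_eq_of_reflTransGen {c c' : NWTConfig} (h : ReflTransGen NWTStep c c')
    (hc : toggleClosed c = true) : c'.2.pastToggle = c.2.pastToggle := by
  induction h with
  | refl => rfl
  | tail hcd hstep ih =>
    have hd : toggleClosed _ = true :=
      (hcd.apply_eq_of_step toggleClosed fun _ _ h => h.toggleClosed_eq).trans hc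
    exact (hstep.pastToggle_eq_of_toggleClosed hd).trans ih

section External

variable {b : Bool} {x y : AP2TLoc}

theorem synced_of_reflTransGen {σ' : Bool × Bool} (hx : x ≠ .M ∧ x ≠ .N)
    (hy : y ≠ .M ∧ y ≠ .N) (h : ReflTransGen NWTStep ((b, b), x) (σ', y)) : σ'.1 = σ'.2 := by
  have := h.apply_eq_of_step (fun c => c.1.1 ^^ c.1.2 ^^ c.2.isInternal)
    fun _ _ h => h.xor_isInternal_eq
  simpa [AP2TLoc.isInternal_eq_false hx, AP2TLoc.isInternal_eq_false hy] using this

theorem ap2t_of_reflTransGen {p : Bool} (hx : x ≠ .M ∧ x ≠ .N) (hy : y ≠ .M ∧ y ≠ .N)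
    (h : ReflTransGen NWTStep ((b, b), x) ((p, p), y)) :
    (y = x ∧ (p, p) = (b, b)) ∨ ((p, p) = (!b, !b) ∧ AP2TTarget b x y) := by
  have htop : y.isTop = x.isTop := h.apply_eq_of_step (·.2.isTop) fun _ _ h => h.isTop_eq
  have hgate : (y.pastToggle ^^ p) = (x.pastToggle ^^ b) := by
    simpa only [toggleClosed, toggleState_diag] using
      h.apply_eq_of_step toggleClosed fun _ _ h => h.toggleClosed_eq
  by_cases hpast : y.pastToggle = x.pastToggle
  · refine .inl ⟨AP2TLoc.eq_of_isTop_eq_of_pastToggle_eq hx hy htop hpast, ?_⟩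
    rw [hpast, Bool.xor_right_inj] at hgate
    rw [hgate]
  · have hopen : (x.pastToggle ^^ b) = false := by
      by_contra hclosed
      exact hpast <| pastToggle_eq_of_reflTransGen h <| by
        simpa [toggleClosed, toggleState_diag] using hclosed
    have hxb : x.pastToggle = b := by simpa using hopen
    have hyp : y.pastToggle = p := by simpa [hopen] using hgate
    have hp : p = !b := Bool.eq_not_iff.mpr (hxb ▸ hyp ▸ hpast)
    subst hp
    exact .inr ⟨rfl, AP2TLoc.ap2tTarget_of_pastToggle hx hy htop hxb hyp⟩

end External

theorem reflTransGen_of_ap2tTarget {b : Bool} {x y : AP2TLoc} (h : AP2TTarget b x y) :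
    ReflTransGen NWTStep ((b, b), x) ((!b, !b), y) := by
  rcases h with ⟨rfl, ⟨rfl, rfl⟩ | ⟨rfl, rfl⟩⟩ | ⟨rfl, ⟨rfl, rfl⟩ | ⟨rfl, rfl⟩⟩
  · exact .tail (b := ((false, true), .M)) (.single (by simp [NWTStep])) (by simp [NWTStep])
  · exact .tail (b := ((false, true), .N)) (.single (by simp [NWTStep])) (by simp [NWTStep])
  · exact .tail (b := ((false, true), .M)) (.single (by simp [NWTStep])) (by simp [NWTStep])
  · exact .tail (b := ((false, true), .N)) (.single (by simp [NWTStep])) (by simp [NWTStep])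

/-- in the NWT-to-AP2T construction the two gadgets' states remain
synchronized at all reachable external configurations, and the composed system's
external behavior equals that of an antiparallel 2-toggle: starting synchronized in
state `(b, b)` at an external location `x`, the external configurations reachable are
exactly staying put and the AP2T traversal (which flips both states). -/
theorem nwt_simulates_ap2t (b : Bool) (x y : AP2TLoc) (σ' : Bool × Bool)
    (hx : x ≠ .M ∧ x ≠ .N) (hy : y ≠ .M ∧ y ≠ .N) :
    (Relation.ReflTransGen NWTStep ((b, b), x) (σ', y) → σ'.1 = σ'.2) ∧
    (Relation.ReflTransGen NWTStep ((b, b), x) (σ', y) ↔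
      ((y = x ∧ σ' = (b, b)) ∨ (σ' = (!b, !b) ∧ AP2TTarget b x y))) := by
  refine ⟨synced_of_reflTransGen hx hy, fun h => ?_, ?_⟩
  · obtain ⟨p, q⟩ := σ'
    obtain rfl : p = q := synced_of_reflTransGen hx hy h
    exact ap2t_of_reflTransGen hx hy h
  · rintro (⟨rfl, rfl⟩ | ⟨rfl, h⟩)
    · rfl
    · exact reflTransGen_of_ap2tTarget h
end

section
/- Any nontrivial deterministic reversible 2-state 2-tunnel gadget has, up to reflection and relabeling, one of exactly nine planar types: crossing/non-crossing tripwire-lock, crossing/non-crossing toggle-lock, crossing/non-crossing tripwire-toggle, and crossing/parallel/antiparallel 2-toggle. -/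
/- A planar 2-state 2-tunnel gadget: 4 locations `Fin 4` in clockwise order on the
gadget boundary, 2 states `Bool`, the locations paired into 2 tunnels by a fixed-point
free involution `μ`, and all traversals crossing tunnels. -/

section
/-- Gadget behaviors are relations on (state, location) pairs. -/
abbrev Gadget2 := Bool × Fin 4 → Bool × Fin 4 → Prop

/-- Deterministic: at most one traversal from each (state, location) pair. -/
def Det2 (g : Gadget2) : Prop := ∀ x y y', g x y → g x y' → y = y'

/-- Reversible: every traversal can be immediately undone. -/
def Rev2 (g : Gadget2) : Prop := ∀ x y, g x y → g y x

/-- The 4 locations are matched into 2 tunnels by `μ`, and all traversals cross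
tunnels. -/
def TunnelStruct2 (g : Gadget2) (μ : Fin 4 → Fin 4) : Prop :=
  Function.Involutive μ ∧ (∀ a, μ a ≠ a) ∧
    ∀ s a s' b, g (s, a) (s', b) → b = μ a

/-- The tunnel through `a` is a tripwire: passable both ways in both states, each
traversal flipping the state. -/
def TripwireT2 (g : Gadget2) (μ : Fin 4 → Fin 4) (a : Fin 4) : Prop :=
  ∀ s s', (g (s, a) (s', μ a) ↔ s' = !s) ∧ (g (s, μ a) (s', a) ↔ s' = !s)

/-- The tunnel through `a` is a lock: passable both ways in state `s₀` without state
change, impassable in the other state. -/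
def LockT2 (g : Gadget2) (μ : Fin 4 → Fin 4) (a : Fin 4) : Prop :=
  ∃ s₀ : Bool, ∀ s s',
    (g (s, a) (s', μ a) ↔ (s = s₀ ∧ s' = s)) ∧
    (g (s, μ a) (s', a) ↔ (s = s₀ ∧ s' = s))

/-- The tunnel through `a` is a toggle: in each state passable in exactly one
direction, opposite in the two states, each traversal flipping the state. -/
def ToggleT2 (g : Gadget2) (μ : Fin 4 → Fin 4) (a : Fin 4) : Prop :=
  ∃ b₀ : Bool, ∀ s s',
    (g (s, if xor s b₀ then μ a else a) (s', if xor s b₀ then a else μ a) ↔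
      s' = !s) ∧
    ¬ g (s, if xor s b₀ then a else μ a) (s', if xor s b₀ then μ a else a)

/-- The tunnel through `a` is trivial: always open both ways with no state change, or
never passable. -/
def TrivialT2 (g : Gadget2) (μ : Fin 4 → Fin 4) (a : Fin 4) : Prop :=
  (∀ s s', (g (s, a) (s', μ a) ↔ s' = s) ∧ (g (s, μ a) (s', a) ↔ s' = s)) ∨
  (∀ s s', ¬ g (s, a) (s', μ a) ∧ ¬ g (s, μ a) (s', a))

/-- A nontrivial deterministic reversible 2-state 2-tunnel planar gadget: deterministic,
reversible, tunnel-structured, with no trivial tunnel, and not equivalent to a 1-state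
gadget (which excludes the lock–lock and tripwire–tripwire combinations). -/
def ValidNontrivial2 (g : Gadget2) : Prop :=
  Det2 g ∧ Rev2 g ∧
    ∃ μ : Fin 4 → Fin 4, TunnelStruct2 g μ ∧
      (∀ a, ¬ TrivialT2 g μ a) ∧
      ¬ (∀ a, LockT2 g μ a) ∧ ¬ (∀ a, TripwireT2 g μ a)

/-- Relabelings of the locations preserving the cyclic (planar) order up to
reflection: the dihedral permutations of `Fin 4`. -/
def Dihedral4 (ρ : Fin 4 ≃ Fin 4) : Prop :=
  ∃ c : Fin 4, (∀ i, ρ i = i + c) ∨ (∀ i, ρ i = c - i)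

/-- Two planar gadgets are equivalent up to reflection and relabeling: some dihedral
relabeling of the locations and some relabeling of the two states carries one
behavior to the other. -/
def GEquiv2 (g g' : Gadget2) : Prop :=
  ∃ ρ : Fin 4 ≃ Fin 4, Dihedral4 ρ ∧
    ∃ τ : Bool ≃ Bool, ∀ s a s' b, g' (s, a) (s', b) ↔ g (τ s, ρ a) (τ s', ρ b)

/-! Determinism and the tunnel structure reduce a gadget to one move table per tunnel:
(state, entry side) ↦ new state or blocked. Reversibility and nontriviality leave exactly five
tables: the tripwire, the lock open in either state, and the toggle in either orientation. A
fixed-point-free involution of four boundary points is one of three matchings, so every gadget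
in question is one of `3 · 5²` explicit ones, and a finite check sorts these into the nine
classes once the lock–lock and tripwire–tripwire combinations are discarded. -/

inductive TunnelKind
  | tripwire
  | lock (s₀ : Bool)
  | toggle (b₀ : Bool)
  deriving DecidableEq, Fintype

namespace TunnelKind

/-- `k.Moves s d s'`: entering the tunnel in state `s` from side `d` leads to state `s'`. -/
def Moves : TunnelKind → Bool → Bool → Bool → Prop
  | tripwire, s, _, s' => s' = !s
  | lock s₀, s, _, s' => s = s₀ ∧ s' = s
  | toggle b₀, s, d, s' => d = xor s b₀ ∧ s' = !s

instance (k : TunnelKind) (s d s' : Bool) : Decidable (k.Moves s d s') := by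
  cases k <;> unfold Moves <;> infer_instance

theorem moves_unique : ∀ (k : TunnelKind) (s d s₁ s₂ : Bool),
    k.Moves s d s₁ → k.Moves s d s₂ → s₁ = s₂ := by
  decide

theorem moves_reverse : ∀ (k : TunnelKind) (s d s' : Bool),
    k.Moves s d s' → k.Moves s' (!d) s := by
  decide

set_option maxRecDepth 4000 in
theorem exists_moves_iff_bool : ∀ r : Bool → Bool → Bool → Bool,
    (∀ s d s₁ s₂, r s d s₁ → r s d s₂ → s₁ = s₂) →
    (∀ s d s', r s d s' → r s' (!d) s) →
    ¬ ((∀ s d s', r s d s' ↔ s' = s) ∨ ∀ s d s', ¬ r s d s') →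
    ∃ k : TunnelKind, ∀ s d s', r s d s' ↔ k.Moves s d s' := by
  decide

theorem exists_moves_iff (r : Bool → Bool → Bool → Prop)
    (hdet : ∀ s d s₁ s₂, r s d s₁ → r s d s₂ → s₁ = s₂)
    (hrev : ∀ s d s', r s d s' → r s' (!d) s)
    (hnt : ¬ ((∀ s d s', r s d s' ↔ s' = s) ∨ ∀ s d s', ¬ r s d s')) :
    ∃ k : TunnelKind, ∀ s d s', r s d s' ↔ k.Moves s d s' := by
  classical
  simpa using exists_moves_iff_bool (fun s d s' => decide (r s d s'))
    (by simpa using hdet) (by simpa using hrev) (by simpa using hnt)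

end TunnelKind

section Layout

/- A layout `e : Fin 4 ≃ Bool × Bool` names each location by its tunnel and its side in that
tunnel; the two tunnels are `false` and `true`. -/
variable (e : Fin 4 ≃ Bool × Bool)

def partner (a : Fin 4) : Fin 4 := e.symm ((e a).1, !(e a).2)

@[simp]
theorem partner_symm_apply (i d : Bool) : partner e (e.symm (i, d)) = e.symm (i, !d) := by
  simp [partner]

theorem partner_involutive : Function.Involutive (partner e) := by
  intro a
  simp [partner]

theorem partner_ne (a : Fin 4) : partner e a ≠ a := by
  intro h
  simpa [partner] using congrArg (fun a => (e a).2) h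

def twoTunnel (k₀ k₁ : TunnelKind) : Gadget2 :=
  fun x y => y.2 = partner e x.2 ∧ (cond (e x.2).1 k₁ k₀).Moves x.1 (e x.2).2 y.1

instance (k₀ k₁ : TunnelKind) (x y : Bool × Fin 4) : Decidable (twoTunnel e k₀ k₁ x y) := by
  unfold twoTunnel; infer_instance

variable {e}

theorem det2_twoTunnel (k₀ k₁ : TunnelKind) : Det2 (twoTunnel e k₀ k₁) := by
  rintro x y y' ⟨hy, hm⟩ ⟨hy', hm'⟩
  exact Prod.ext (TunnelKind.moves_unique _ _ _ _ _ hm hm') (hy.trans hy'.symm)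

theorem rev2_twoTunnel (k₀ k₁ : TunnelKind) : Rev2 (twoTunnel e k₀ k₁) := by
  rintro ⟨s, a⟩ ⟨s', b⟩ ⟨rfl, hm⟩
  refine ⟨(partner_involutive e a).symm, ?_⟩
  simpa [partner] using TunnelKind.moves_reverse _ _ _ _ hm

theorem tunnelStruct2_twoTunnel (k₀ k₁ : TunnelKind) :
    TunnelStruct2 (twoTunnel e k₀ k₁) (partner e) :=
  ⟨partner_involutive e, partner_ne e, fun _ _ _ _ h => h.1⟩

theorem validNontrivial2_twoTunnel {k₀ k₁ : TunnelKind}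
    (hnt : ∀ a, ¬ TrivialT2 (twoTunnel e k₀ k₁) (partner e) a)
    (hlock : ¬ ∀ a, LockT2 (twoTunnel e k₀ k₁) (partner e) a)
    (htrip : ¬ ∀ a, TripwireT2 (twoTunnel e k₀ k₁) (partner e) a) :
    ValidNontrivial2 (twoTunnel e k₀ k₁) :=
  ⟨det2_twoTunnel k₀ k₁, rev2_twoTunnel k₀ k₁, partner e, tunnelStruct2_twoTunnel k₀ k₁,
    hnt, hlock, htrip⟩

theorem exists_eq_twoTunnel {g : Gadget2} (hdet : Det2 g) (hrev : Rev2 g)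
    (hμ : TunnelStruct2 g (partner e)) (hnt : ∀ a, ¬ TrivialT2 g (partner e) a) :
    ∃ k₀ k₁, g = twoTunnel e k₀ k₁ := by
  have tunnel (i : Bool) : ∃ k : TunnelKind, ∀ s d s',
      g (s, e.symm (i, d)) (s', e.symm (i, !d)) ↔ k.Moves s d s' := by
    refine TunnelKind.exists_moves_iff _ (fun s d s₁ s₂ h₁ h₂ => ?_) (fun s d s' h => ?_) ?_
    · exact congrArg Prod.fst (hdet _ _ _ h₁ h₂)
    · simpa using hrev _ _ h
    · refine fun h => hnt (e.symm (i, false)) ?_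
      simp only [TrivialT2, partner_symm_apply, Bool.not_false]
      exact h.imp (fun h s s' => ⟨h s false s', h s true s'⟩)
        (fun h s s' => ⟨h s false s', h s true s'⟩)
  choose k hk using tunnel
  refine ⟨k false, k true, ?_⟩
  funext ⟨s, a⟩ ⟨s', b⟩
  obtain ⟨⟨i, d⟩, rfl⟩ := e.symm.surjective a
  have hcond : cond i (k true) (k false) = k i := by cases i <;> rfl
  apply propext
  constructor
  · intro h
    obtain rfl : b = e.symm (i, !d) := by simpa using hμ.2.2 _ _ _ _ h
    simpa [twoTunnel, hcond] using (hk i s d s').1 h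
  · rintro ⟨rfl, hm⟩
    simp only [Equiv.apply_symm_apply, hcond] at hm
    simpa using (hk i s d s').2 hm

end Layout

theorem Equiv.Perm.bool_eq_one_or_boolNot (τ : Equiv.Perm Bool) :
    τ = 1 ∨ τ = Equiv.boolNot := by
  have hne : τ false ≠ τ true := τ.injective.ne Bool.false_ne_true
  cases hf : τ false <;> cases ht : τ true <;> simp_all [Equiv.ext_iff, Bool.forall_bool]

def dihedral (c : Fin 4) : Bool → Equiv.Perm (Fin 4)
  | false => Equiv.addRight c
  | true => Equiv.subLeft c

theorem dihedral4_dihedral (c : Fin 4) (r : Bool) : Dihedral4 (dihedral c r) := by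
  cases r
  exacts [⟨c, Or.inl fun _ => rfl⟩, ⟨c, Or.inr fun _ => rfl⟩]

theorem Dihedral4.exists_eq_dihedral {ρ : Fin 4 ≃ Fin 4} (hρ : Dihedral4 ρ) :
    ∃ c r, ρ = dihedral c r := by
  obtain ⟨c, h | h⟩ := hρ
  exacts [⟨c, false, Equiv.ext h⟩, ⟨c, true, Equiv.ext h⟩]

theorem gEquiv2_iff {g g' : Gadget2} : GEquiv2 g g' ↔
    ∃ c r, ∃ τ ∈ [1, Equiv.boolNot], ∀ s a s' b,
      g' (s, a) (s', b) ↔ g (τ s, dihedral c r a) (τ s', dihedral c r b) := by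
  constructor
  · rintro ⟨ρ, hρ, τ, h⟩
    obtain ⟨c, r, rfl⟩ := hρ.exists_eq_dihedral
    exact ⟨c, r, τ, by simpa using Equiv.Perm.bool_eq_one_or_boolNot τ, h⟩
  · rintro ⟨c, r, τ, -, h⟩
    exact ⟨dihedral c r, dihedral4_dihedral c r, τ, h⟩

section Decidable

variable (g : Gadget2) [∀ x y, Decidable (g x y)]

instance (g' : Gadget2) [∀ x y, Decidable (g' x y)] : Decidable (GEquiv2 g g') :=
  decidable_of_iff _ gEquiv2_iff.symm

variable (μ : Fin 4 → Fin 4) (a : Fin 4)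

instance : Decidable (TripwireT2 g μ a) := by unfold TripwireT2; infer_instance
instance : Decidable (LockT2 g μ a) := by unfold LockT2; infer_instance
instance : Decidable (TrivialT2 g μ a) := by unfold TrivialT2; infer_instance

end Decidable

/- `layout0j` puts locations `0` and `j` in one tunnel; only `layout02` has crossing tunnels. -/
def layout01 : Fin 4 ≃ Bool × Bool where
  toFun := ![(false, false), (false, true), (true, false), (true, true)]
  invFun p := cond p.1 (cond p.2 3 2) (cond p.2 1 0)
  left_inv := by decide
  right_inv := by decide

def layout02 : Fin 4 ≃ Bool × Bool where
  toFun := ![(false, false), (true, false), (false, true), (true, true)]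
  invFun p := cond p.1 (cond p.2 3 1) (cond p.2 2 0)
  left_inv := by decide
  right_inv := by decide

def layout03 : Fin 4 ≃ Bool × Bool where
  toFun := ![(false, false), (true, false), (true, true), (false, true)]
  invFun p := cond p.1 (cond p.2 2 1) (cond p.2 3 0)
  left_inv := by decide
  right_inv := by decide

def layouts : List (Fin 4 ≃ Bool × Bool) := [layout01, layout02, layout03]

set_option maxRecDepth 4000 in
theorem exists_mem_layouts_partner_eq : ∀ μ : Fin 4 → Fin 4, (∀ a, μ (μ a) = a) →
    (∀ a, μ a ≠ a) → ∃ e ∈ layouts, partner e = μ := by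
  decide

/- In `layout01` the tunnels `{0, 1}` and `{2, 3}` lie on opposite sides of the boundary, so two
toggles of the same orientation `toggle false` point in opposite directions: the last two
entries are the parallel and the antiparallel 2-toggle. -/
open TunnelKind in
def nineTypes : List ((Fin 4 ≃ Bool × Bool) × TunnelKind × TunnelKind) :=
  [(layout01, tripwire, lock false), (layout02, tripwire, lock false),
   (layout01, toggle false, lock false), (layout02, toggle false, lock false),
   (layout01, tripwire, toggle false), (layout02, tripwire, toggle false),
   (layout02, toggle false, toggle false),
   (layout01, toggle false, toggle true), (layout01, toggle false, toggle false)]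

def nineGadgets : List Gadget2 := nineTypes.map fun t => twoTunnel t.1 t.2.1 t.2.2

set_option maxRecDepth 4000 in
theorem nineTypes_nontrivial : ∀ t ∈ nineTypes,
    (∀ a, ¬ TrivialT2 (twoTunnel t.1 t.2.1 t.2.2) (partner t.1) a) ∧
    ¬ (∀ a, LockT2 (twoTunnel t.1 t.2.1 t.2.2) (partner t.1) a) ∧
    ¬ (∀ a, TripwireT2 (twoTunnel t.1 t.2.1 t.2.2) (partner t.1) a) := by
  decide

theorem nineTypes_pairwise_not_gEquiv2 : nineTypes.Pairwise fun t t' =>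
    ¬ GEquiv2 (twoTunnel t.1 t.2.1 t.2.2) (twoTunnel t'.1 t'.2.1 t'.2.2) := by
  decide

theorem exists_mem_nineTypes_gEquiv2 : ∀ e ∈ layouts, ∀ k₀ k₁ : TunnelKind,
    ¬ (∀ a, LockT2 (twoTunnel e k₀ k₁) (partner e) a) →
    ¬ (∀ a, TripwireT2 (twoTunnel e k₀ k₁) (partner e) a) →
    ∃ t ∈ nineTypes, GEquiv2 (twoTunnel e k₀ k₁) (twoTunnel t.1 t.2.1 t.2.2) := by
  decide

/-- up to reflection and relabeling, there are exactly nine nontrivial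
deterministic reversible 2-state 2-tunnel planar gadgets (crossing and non-crossing
tripwire-lock, toggle-lock and tripwire-toggle, and crossing, parallel and antiparallel
2-toggles). -/
theorem nine_nontrivial_two_tunnel_gadgets :
    ∃ L : List Gadget2, L.length = 9 ∧
      (∀ g ∈ L, ValidNontrivial2 g) ∧
      L.Pairwise (fun g g' => ¬ GEquiv2 g g') ∧
      (∀ g : Gadget2, ValidNontrivial2 g → ∃ g' ∈ L, GEquiv2 g g') := by
  refine ⟨nineGadgets, rfl, ?_, List.pairwise_map.2 nineTypes_pairwise_not_gEquiv2, ?_⟩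
  · simp only [nineGadgets, List.forall_mem_map]
    intro t ht
    obtain ⟨hnt, hlock, htrip⟩ := nineTypes_nontrivial t ht
    exact validNontrivial2_twoTunnel hnt hlock htrip
  · rintro g ⟨hdet, hrev, μ, hμ, hnt, hlock, htrip⟩
    obtain ⟨e, he, rfl⟩ := exists_mem_layouts_partner_eq μ hμ.1 hμ.2.1
    obtain ⟨k₀, k₁, rfl⟩ := exists_eq_twoTunnel hdet hrev hμ hnt
    obtain ⟨t, ht, hequiv⟩ := exists_mem_nineTypes_gEquiv2 e he k₀ k₁ hlock htrip
    exact ⟨_, List.mem_map_of_mem ht, hequiv⟩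

end
end
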